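/- arXiv:2504.04668 — 10 statements merged into one kernel-verified Lean document; each statement's English description precedes it below -/
import Mathlib

section
/- Let T > 0, H ∈ (0,1), K > 0, and let φ : (0,2T] → ℝ be differentiable on (0,2T] with |φ′(u)| ≤ K u^{H-3/2} for all u ∈ (0,2T]. Then there exists a constant C > 0, depending only on T, H and K, such that for all h ∈ (0,T], ∫₀^T |φ(t+h) − φ(t)| dt ≤ C h^{(H+1)/2}. -/
open MeasureTheory Set Real

/-!
Split the exponent as `H - 3/2 = (p - 1) + q` with `p = (H + 1)/2 ∈ (0, 1]` and
`q = H/2 - 1 ∈ (-1, 0]`. On `[t, t + h]` we have `u ^ q ≤ t ^ q`, so `φ` is fenced by a primitive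
of `K t^q u^(p-1)`; subadditivity of `x ↦ x ^ p` then gives
`|φ (t + h) - φ t| ≤ K / p * h ^ p * t ^ q`, a bound that is integrable on `(0, T]` since `q > -1`.
-/

lemma abs_sub_le_of_abs_deriv_le_rpow {φ φ' : ℝ → ℝ} {K p q t h : ℝ} (hp : 0 < p) (hp1 : p ≤ 1)
    (hq : q ≤ 0) (ht : 0 < t) (hh : 0 ≤ h)
    (hderiv : ∀ u ∈ Icc t (t + h), HasDerivAt φ (φ' u) u)
    (hbound : ∀ u ∈ Icc t (t + h), |φ' u| ≤ K * u ^ (p - 1 + q)) :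
    |φ (t + h) - φ t| ≤ K / p * h ^ p * t ^ q := by
  have hK : 0 ≤ K := nonneg_of_mul_nonneg_left
    ((abs_nonneg _).trans (hbound t ⟨le_rfl, by linarith⟩)) (rpow_pos_of_pos ht _)
  let G : ℝ → ℝ := fun u ↦ K / p * t ^ q * (u ^ p - t ^ p)
  have hG : ∀ u ∈ Icc t (t + h), HasDerivAt G (K * t ^ q * u ^ (p - 1)) u := by
    intro u hu
    have hu0 : u ≠ 0 := (ht.trans_le hu.1).ne'
    refine (((hasDerivAt_rpow_const (Or.inl hu0)).sub_const (t ^ p)).const_mul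
      (K / p * t ^ q)).congr_deriv ?_
    field_simp
  have hderiv_le : ∀ u ∈ Icc t (t + h), ‖φ' u‖ ≤ K * t ^ q * u ^ (p - 1) := by
    intro u hu
    have hu0 : 0 < u := ht.trans_le hu.1
    calc ‖φ' u‖ ≤ K * u ^ (p - 1 + q) := hbound u hu
      _ = K * u ^ q * u ^ (p - 1) := by rw [rpow_add hu0]; ring
      _ ≤ K * t ^ q * u ^ (p - 1) := by
        have := rpow_le_rpow_of_nonpos ht hu.1 hq
        gcongr
  have hcmp : ‖φ (t + h) - φ t‖ ≤ G (t + h) :=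
    image_norm_le_of_norm_deriv_right_le_deriv_boundary' (f := fun u ↦ φ u - φ t)
      (fun u hu ↦ ((hderiv u hu).continuousAt.sub continuousAt_const).continuousWithinAt)
      (fun u hu ↦ ((hderiv u (Ico_subset_Icc_self hu)).sub_const (φ t)).hasDerivWithinAt)
      (by simp [G]) (fun u hu ↦ (hG u hu).continuousAt.continuousWithinAt)
      (fun u hu ↦ (hG u (Ico_subset_Icc_self hu)).hasDerivWithinAt)
      (fun u hu ↦ hderiv_le u (Ico_subset_Icc_self hu)) ⟨by linarith, le_rfl⟩
  calc |φ (t + h) - φ t| ≤ K / p * t ^ q * ((t + h) ^ p - t ^ p) := hcmp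
    _ ≤ K / p * t ^ q * h ^ p := by
        gcongr
        linarith [rpow_add_le_add_rpow ht.le hh hp.le hp1]
    _ = K / p * h ^ p * t ^ q := by ring

lemma integral_Ioc_rpow {q T : ℝ} (hq : -1 < q) (hT : 0 ≤ T) :
    ∫ t in Ioc 0 T, t ^ q = T ^ (q + 1) / (q + 1) := by
  rw [← intervalIntegral.integral_of_le hT, integral_rpow (Or.inl hq),
    zero_rpow (by linarith), sub_zero]

lemma integral_abs_sub_le_of_abs_deriv_le_rpow {φ φ' : ℝ → ℝ} {K p q T h : ℝ}
    (hp : 0 < p) (hp1 : p ≤ 1) (hq : -1 < q) (hq0 : q ≤ 0) (hT : 0 ≤ T) (hh : 0 ≤ h)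
    (hderiv : ∀ u ∈ Ioc 0 (T + h), HasDerivAt φ (φ' u) u)
    (hbound : ∀ u ∈ Ioc 0 (T + h), |φ' u| ≤ K * u ^ (p - 1 + q)) :
    ∫ t in Ioc 0 T, |φ (t + h) - φ t| ≤ K / p * h ^ p * (T ^ (q + 1) / (q + 1)) := by
  have hsub : ∀ t ∈ Ioc 0 T, Icc t (t + h) ⊆ Ioc 0 (T + h) := fun t ht u hu ↦
    ⟨ht.1.trans_le hu.1, by linarith [hu.2, ht.2]⟩
  have hint : IntegrableOn (fun t ↦ K / p * h ^ p * t ^ q) (Ioc 0 T) :=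
    ((intervalIntegral.intervalIntegrable_rpow' hq).const_mul _).1
  calc ∫ t in Ioc 0 T, |φ (t + h) - φ t|
      ≤ ∫ t in Ioc 0 T, K / p * h ^ p * t ^ q := by
        refine integral_mono_of_nonneg (ae_of_all _ fun t ↦ abs_nonneg _) hint ?_
        refine (ae_restrict_iff' measurableSet_Ioc).2 (ae_of_all _ fun t ht ↦ ?_)
        exact abs_sub_le_of_abs_deriv_le_rpow hp hp1 hq0 ht.1 hh
          (fun u hu ↦ hderiv u (hsub t ht hu)) (fun u hu ↦ hbound u (hsub t ht hu))
    _ = K / p * h ^ p * (T ^ (q + 1) / (q + 1)) := by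
        rw [integral_const_mul, integral_Ioc_rpow hq hT]

/-- second estimate of Lemma 3.1, with exponent (H+1)/2. -/
theorem stmt_1 (T H K : ℝ) (hT : 0 < T) (hH : H ∈ Set.Ioo (0:ℝ) 1) (hK : 0 < K)
    (φ φ' : ℝ → ℝ)
    (hderiv : ∀ u ∈ Set.Ioc (0:ℝ) (2*T), HasDerivAt φ (φ' u) u)
    (hbound : ∀ u ∈ Set.Ioc (0:ℝ) (2*T), |φ' u| ≤ K * u ^ (H - 3/2)) :
    ∃ C > 0, ∀ h ∈ Set.Ioc (0:ℝ) T,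
      (∫ t in Set.Ioc (0:ℝ) T, |φ (t + h) - φ t|) ≤ C * h ^ ((H + 1)/2) := by
  obtain ⟨hH0, hH1⟩ := hH
  refine ⟨4 * K / (H * (H + 1)) * T ^ (H / 2), by positivity, fun h ⟨hh0, hhT⟩ ↦ ?_⟩
  have hsub : Ioc 0 (T + h) ⊆ Ioc 0 (2 * T) := Ioc_subset_Ioc_right (by linarith)
  calc ∫ t in Ioc 0 T, |φ (t + h) - φ t|
      ≤ K / ((H + 1) / 2) * h ^ ((H + 1) / 2) * (T ^ (H / 2 - 1 + 1) / (H / 2 - 1 + 1)) :=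
        integral_abs_sub_le_of_abs_deriv_le_rpow (by linarith) (by linarith) (by linarith)
          (by linarith) hT.le hh0.le (fun u hu ↦ hderiv u (hsub hu))
          (fun u hu ↦ by convert hbound u (hsub hu) using 3; ring)
    _ = 4 * K / (H * (H + 1)) * T ^ (H / 2) * h ^ ((H + 1) / 2) := by
        rw [sub_add_cancel]
        field_simp
        norm_num
end

section
/- Let T > 0, H ∈ (0,1), K > 0, and let φ : (0,2T] → ℝ be differentiable on (0,2T] with |φ′(u)| ≤ K u^{H-3/2} for all u ∈ (0,2T]. Then there exists a constant C > 0, depending only on T, H and K, such that for all h ∈ (0,T], (∫₀^T (φ(t+h) − φ(t))² dt)^{1/2} ≤ C h^{H}. -/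
/-!
Split `(0, T]` at `h`. For `t ≥ h` the mean value theorem gives
`|φ (t + h) - φ t| ≤ K h t ^ (H - 3/2)`, whose square integrates over `(h, ∞)` to
`K² h ^ (2H) / (2 - 2H)`. For `t ≤ h` the singularity of `φ'` at `0` is tamed by
`u ^ (H - 3/2) ≤ t ^ ((H - 1)/2) u ^ (H/2 - 1)` on `[t, t + h]`: integrating the right-hand side
gives `(φ (t + h) - φ t)² ≲ h ^ H t ^ (H - 1)`, and `t ^ (H - 1)` is integrable at `0` with
`∫₀ʰ t ^ (H - 1) = h ^ H / H`.
-/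

open MeasureTheory Set

theorem norm_sub_le_sub_of_norm_deriv_le {E : Type*} [NormedAddCommGroup E] [NormedSpace ℝ E]
    {f f' : ℝ → E} {B B' : ℝ → ℝ} {a b : ℝ} (hab : a ≤ b)
    (hf : ∀ x ∈ Icc a b, HasDerivAt f (f' x) x) (hB : ∀ x ∈ Icc a b, HasDerivAt B (B' x) x)
    (hle : ∀ x ∈ Icc a b, ‖f' x‖ ≤ B' x) : ‖f b - f a‖ ≤ B b - B a :=
  image_norm_le_of_norm_deriv_right_le_deriv_boundary' (f := fun x => f x - f a)
    (fun x hx => ((hf x hx).continuousAt.sub continuousAt_const).continuousWithinAt)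
    (fun x hx => ((hf x (Ico_subset_Icc_self hx)).sub_const (f a)).hasDerivWithinAt)
    (by simp) (fun x hx => ((hB x hx).continuousAt.sub continuousAt_const).continuousWithinAt)
    (fun x hx => ((hB x (Ico_subset_Icc_self hx)).sub_const (B a)).hasDerivWithinAt)
    (fun x hx => hle x (Ico_subset_Icc_self hx)) (right_mem_Icc.2 hab)

theorem integrableOn_and_setIntegral_le_of_le {α : Type*} [TopologicalSpace α]
    [MeasurableSpace α] [OpensMeasurableSpace α] {μ : Measure α} {f M : α → ℝ} {s : Set α}
    (hs : MeasurableSet s) (hf : ContinuousOn f s) (hM : IntegrableOn M s μ)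
    (hf0 : ∀ x ∈ s, 0 ≤ f x) (hfM : ∀ x ∈ s, f x ≤ M x) :
    IntegrableOn f s μ ∧ ∫ x in s, f x ∂μ ≤ ∫ x in s, M x ∂μ := by
  have hint : IntegrableOn f s μ :=
    hM.mono' (hf.aestronglyMeasurable hs) <| (ae_restrict_iff' hs).2 <| ae_of_all _ fun x hx => by
      rw [Real.norm_eq_abs, abs_of_nonneg (hf0 x hx)]
      exact hfM x hx
  exact ⟨hint, setIntegral_mono_on hint hM hs hfM⟩

theorem integral_Ioc_zero_rpow_sub_one {H h : ℝ} (hH : 0 < H) (hh : 0 ≤ h) :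
    ∫ t in Ioc 0 h, t ^ (H - 1) = h ^ H / H := by
  rw [← intervalIntegral.integral_of_le hh, integral_rpow (Or.inl (by linarith)), sub_add_cancel,
    Real.zero_rpow hH.ne', sub_zero]

section

variable {φ φ' : ℝ → ℝ} {H K t h : ℝ}

theorem sq_shift_sub_le_of_le (hH0 : 0 < H) (hH1 : H ≤ 1) (hK : 0 ≤ K) (ht : 0 < t)
    (hth : t ≤ h) (hderiv : ∀ u ∈ Icc t (t + h), HasDerivAt φ (φ' u) u)
    (hbound : ∀ u ∈ Icc t (t + h), |φ' u| ≤ K * u ^ (H - 3 / 2)) :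
    (φ (t + h) - φ t) ^ 2 ≤ 4 * 2 ^ H / H ^ 2 * K ^ 2 * h ^ H * t ^ (H - 1) := by
  set c := K * t ^ ((H - 1) / 2)
  have hB : ∀ u ∈ Icc t (t + h),
      HasDerivAt (fun u => c / (H / 2) * u ^ (H / 2)) (c * u ^ (H / 2 - 1)) u := by
    intro u hu
    have := (Real.hasDerivAt_rpow_const (p := H / 2) (Or.inl (ht.trans_le hu.1).ne')).const_mul
      (c / (H / 2))
    rwa [← mul_assoc, div_mul_cancel₀ c (by positivity)] at this
  have hle : ∀ u ∈ Icc t (t + h), ‖φ' u‖ ≤ c * u ^ (H / 2 - 1) := by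
    intro u hu
    have hu0 : 0 < u := ht.trans_le hu.1
    calc ‖φ' u‖ ≤ K * u ^ (H - 3 / 2) := hbound u hu
      _ = K * (u ^ ((H - 1) / 2) * u ^ (H / 2 - 1)) := by
        rw [← Real.rpow_add hu0]; ring_nf
      _ ≤ K * t ^ ((H - 1) / 2) * u ^ (H / 2 - 1) := by
        rw [← mul_assoc]
        have := Real.rpow_le_rpow_of_nonpos ht hu.1 (by linarith : (H - 1) / 2 ≤ 0)
        gcongr
  have hdiff := norm_sub_le_sub_of_norm_deriv_le (by linarith) hderiv hB hle
  have hincr : (t + h) ^ (H / 2) - t ^ (H / 2) ≤ (2 * h) ^ (H / 2) := by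
    have : (t + h) ^ (H / 2) ≤ (2 * h) ^ (H / 2) :=
      Real.rpow_le_rpow (by linarith) (by linarith) (by linarith)
    linarith [Real.rpow_nonneg ht.le (H / 2)]
  have habs : |φ (t + h) - φ t| ≤ c / (H / 2) * (2 * h) ^ (H / 2) := by
    refine hdiff.trans ?_
    rw [← mul_sub]
    gcongr
  calc (φ (t + h) - φ t) ^ 2 = |φ (t + h) - φ t| ^ 2 := (sq_abs _).symm
    _ ≤ (c / (H / 2) * (2 * h) ^ (H / 2)) ^ 2 := by gcongr
    _ = 4 * 2 ^ H / H ^ 2 * K ^ 2 * h ^ H * t ^ (H - 1) := by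
      rw [mul_pow, div_pow, mul_pow, ← Real.rpow_mul_natCast ht.le,
        ← Real.rpow_mul_natCast (by linarith : (0:ℝ) ≤ 2 * h),
        Real.mul_rpow zero_le_two (by linarith)]
      push_cast
      rw [div_mul_cancel₀ _ two_ne_zero, div_mul_cancel₀ _ two_ne_zero]
      ring

theorem sq_shift_sub_le (hH : H ≤ 3 / 2) (hK : 0 ≤ K) (ht : 0 < t) (hh : 0 ≤ h)
    (hderiv : ∀ u ∈ Icc t (t + h), HasDerivAt φ (φ' u) u)
    (hbound : ∀ u ∈ Icc t (t + h), |φ' u| ≤ K * u ^ (H - 3 / 2)) :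
    (φ (t + h) - φ t) ^ 2 ≤ K ^ 2 * h ^ 2 * t ^ (2 * H - 3) := by
  have hle : ∀ u ∈ Icc t (t + h), ‖φ' u‖ ≤ K * t ^ (H - 3 / 2) := fun u hu =>
    (hbound u hu).trans <|
      mul_le_mul_of_nonneg_left (Real.rpow_le_rpow_of_nonpos ht hu.1 (by linarith)) hK
  have habs : |φ (t + h) - φ t| ≤ K * t ^ (H - 3 / 2) * h := by
    have := norm_sub_le_sub_of_norm_deriv_le (by linarith) hderiv
      (fun u _ => hasDerivAt_mul_const (K * t ^ (H - 3 / 2))) hle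
    rwa [Real.norm_eq_abs, ← sub_mul, add_sub_cancel_left, mul_comm] at this
  calc (φ (t + h) - φ t) ^ 2 = |φ (t + h) - φ t| ^ 2 := (sq_abs _).symm
    _ ≤ (K * t ^ (H - 3 / 2) * h) ^ 2 := by gcongr
    _ = K ^ 2 * h ^ 2 * t ^ (2 * H - 3) := by
      rw [mul_pow, mul_pow, ← Real.rpow_mul_natCast ht.le]
      ring_nf

theorem continuousOn_sq_shift_sub {s : Set ℝ}
    (hderiv : ∀ t ∈ s, HasDerivAt φ (φ' t) t ∧ HasDerivAt φ (φ' (t + h)) (t + h)) :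
    ContinuousOn (fun t => (φ (t + h) - φ t) ^ 2) s :=
  continuousOn_of_forall_continuousAt fun t ht =>
    (((hderiv t ht).2.continuousAt.comp (f := (· + h)) (continuous_add_const h).continuousAt).sub
      (hderiv t ht).1.continuousAt).pow 2

theorem integrableOn_and_integral_sq_shift_sub_Ioc_zero_le (hH0 : 0 < H) (hH1 : H ≤ 1)
    (hK : 0 ≤ K) (hh : 0 < h) (hderiv : ∀ u ∈ Ioc 0 (2 * h), HasDerivAt φ (φ' u) u)
    (hbound : ∀ u ∈ Ioc 0 (2 * h), |φ' u| ≤ K * u ^ (H - 3 / 2)) :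
    IntegrableOn (fun t => (φ (t + h) - φ t) ^ 2) (Ioc 0 h) ∧
      ∫ t in Ioc 0 h, (φ (t + h) - φ t) ^ 2 ≤ 4 * 2 ^ H / H ^ 3 * K ^ 2 * h ^ (2 * H) := by
  have hsub : ∀ t ∈ Ioc 0 h, Icc t (t + h) ⊆ Ioc 0 (2 * h) := fun t ht u hu =>
    ⟨ht.1.trans_le hu.1, by linarith [hu.2, ht.2]⟩
  have hM : IntegrableOn (fun t => 4 * 2 ^ H / H ^ 2 * K ^ 2 * h ^ H * t ^ (H - 1)) (Ioc 0 h) :=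
    (intervalIntegrable_iff_integrableOn_Ioc_of_le hh.le).1
      ((intervalIntegral.intervalIntegrable_rpow' (by linarith)).const_mul _)
  obtain ⟨hint, hle⟩ := integrableOn_and_setIntegral_le_of_le measurableSet_Ioc
    (continuousOn_sq_shift_sub fun t ht =>
      ⟨hderiv t (hsub t ht (left_mem_Icc.2 (by linarith [ht.2]))),
        hderiv _ (hsub t ht (right_mem_Icc.2 (by linarith [ht.2])))⟩)
    hM (fun _ _ => sq_nonneg _) fun t ht => sq_shift_sub_le_of_le hH0 hH1 hK ht.1 ht.2
      (fun u hu => hderiv u (hsub t ht hu)) (fun u hu => hbound u (hsub t ht hu))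
  refine ⟨hint, hle.trans_eq ?_⟩
  rw [integral_const_mul, integral_Ioc_zero_rpow_sub_one hH0 hh.le, mul_comm 2 H,
    Real.rpow_mul hh.le, Real.rpow_two]
  field_simp

theorem integrableOn_and_integral_sq_shift_sub_Ioc_le {T : ℝ} (hH : H < 1) (hK : 0 ≤ K)
    (hh : 0 < h) (hderiv : ∀ u ∈ Ioc h (T + h), HasDerivAt φ (φ' u) u)
    (hbound : ∀ u ∈ Ioc h (T + h), |φ' u| ≤ K * u ^ (H - 3 / 2)) :
    IntegrableOn (fun t => (φ (t + h) - φ t) ^ 2) (Ioc h T) ∧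
      ∫ t in Ioc h T, (φ (t + h) - φ t) ^ 2 ≤ K ^ 2 / (2 - 2 * H) * h ^ (2 * H) := by
  have hsub : ∀ t ∈ Ioc h T, Icc t (t + h) ⊆ Ioc h (T + h) := fun t ht u hu =>
    ⟨ht.1.trans_le hu.1, by linarith [hu.2, ht.2]⟩
  have hM : IntegrableOn (fun t => K ^ 2 * h ^ 2 * t ^ (2 * H - 3)) (Ioi h) :=
    (integrableOn_Ioi_rpow_of_lt (by linarith) hh).const_mul _
  obtain ⟨hint, hle⟩ := integrableOn_and_setIntegral_le_of_le measurableSet_Ioc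
    (continuousOn_sq_shift_sub fun t ht =>
      ⟨hderiv t (hsub t ht (left_mem_Icc.2 (by linarith))),
        hderiv _ (hsub t ht (right_mem_Icc.2 (by linarith)))⟩)
    (hM.mono_set Ioc_subset_Ioi_self) (fun _ _ => sq_nonneg _) fun t ht =>
      sq_shift_sub_le (by linarith) hK (hh.trans ht.1) hh.le
        (fun u hu => hderiv u (hsub t ht hu)) (fun u hu => hbound u (hsub t ht hu))
  refine ⟨hint, hle.trans ?_⟩
  calc ∫ t in Ioc h T, K ^ 2 * h ^ 2 * t ^ (2 * H - 3)
      ≤ ∫ t in Ioi h, K ^ 2 * h ^ 2 * t ^ (2 * H - 3) :=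
        setIntegral_mono_set hM
          ((ae_restrict_iff' measurableSet_Ioi).2 (ae_of_all _ fun t ht =>
            by have := Real.rpow_nonneg (hh.trans ht).le (2 * H - 3); positivity))
          Ioc_subset_Ioi_self.eventuallyLE
    _ = K ^ 2 / (2 - 2 * H) * h ^ (2 * H) := by
      rw [integral_const_mul, integral_Ioi_rpow_of_lt (by linarith) hh,
        show 2 * H - 3 + 1 = 2 * H - 2 by ring, Real.rpow_sub hh, Real.rpow_two]
      have : 2 * H - 2 ≠ 0 := by linarith
      rw [show 2 - 2 * H = -(2 * H - 2) by ring]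
      field_simp

theorem integral_sq_shift_sub_le {T : ℝ} (hH : H ∈ Ioo 0 1) (hK : 0 ≤ K) (hh : 0 < h)
    (hhT : h ≤ T) (hderiv : ∀ u ∈ Ioc 0 (2 * T), HasDerivAt φ (φ' u) u)
    (hbound : ∀ u ∈ Ioc 0 (2 * T), |φ' u| ≤ K * u ^ (H - 3 / 2)) :
    ∫ t in Ioc 0 T, (φ (t + h) - φ t) ^ 2 ≤
      K ^ 2 * (4 * 2 ^ H / H ^ 3 + 1 / (2 - 2 * H)) * h ^ (2 * H) := by
  have hnear : Ioc 0 (2 * h) ⊆ Ioc 0 (2 * T) := Ioc_subset_Ioc_right (by linarith)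
  have hfar : Ioc h (T + h) ⊆ Ioc 0 (2 * T) := Ioc_subset_Ioc hh.le (by linarith)
  obtain ⟨hint₁, hle₁⟩ := integrableOn_and_integral_sq_shift_sub_Ioc_zero_le hH.1 hH.2.le hK hh
    (fun u hu => hderiv u (hnear hu)) (fun u hu => hbound u (hnear hu))
  obtain ⟨hint₂, hle₂⟩ := integrableOn_and_integral_sq_shift_sub_Ioc_le hH.2 hK hh
    (fun u hu => hderiv u (hfar hu)) (fun u hu => hbound u (hfar hu))
  rw [← Ioc_union_Ioc_eq_Ioc hh.le hhT,
    setIntegral_union (Ioc_disjoint_Ioc_of_le le_rfl) measurableSet_Ioc hint₁ hint₂]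
  calc _ ≤ 4 * 2 ^ H / H ^ 3 * K ^ 2 * h ^ (2 * H) + K ^ 2 / (2 - 2 * H) * h ^ (2 * H) :=
        add_le_add hle₁ hle₂
    _ = _ := by ring

end

theorem stmt_3_general (T H K : ℝ) (hH : H ∈ Set.Ioo (0:ℝ) 1) (hK : 0 < K)
    (φ φ' : ℝ → ℝ)
    (hderiv : ∀ u ∈ Set.Ioc (0:ℝ) (2*T), HasDerivAt φ (φ' u) u)
    (hbound : ∀ u ∈ Set.Ioc (0:ℝ) (2*T), |φ' u| ≤ K * u ^ (H - 3/2)) :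
    ∃ C > 0, ∀ h ∈ Set.Ioc (0:ℝ) T,
      (∫ t in Set.Ioc (0:ℝ) T, (φ (t + h) - φ t)^2) ^ ((1:ℝ)/2) ≤ C * h ^ H := by
  set D := K ^ 2 * (4 * 2 ^ H / H ^ 3 + 1 / (2 - 2 * H))
  have hD : 0 < D := by
    have : 0 < 2 - 2 * H := by linarith [hH.2]
    have := hH.1
    positivity
  refine ⟨D ^ (1 / 2 : ℝ), by positivity, fun h ⟨hh, hhT⟩ => ?_⟩
  calc (∫ t in Ioc 0 T, (φ (t + h) - φ t) ^ 2) ^ (1 / 2 : ℝ)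
      ≤ (D * h ^ (2 * H)) ^ (1 / 2 : ℝ) :=
        Real.rpow_le_rpow (setIntegral_nonneg measurableSet_Ioc fun _ _ => sq_nonneg _)
          (integral_sq_shift_sub_le hH hK.le hh hhT hderiv hbound) (by norm_num)
    _ = D ^ (1 / 2 : ℝ) * h ^ H := by
      rw [Real.mul_rpow hD.le (by positivity), ← Real.rpow_mul hh.le]
      ring_nf

/-- fourth estimate of Lemma 3.1. -/
theorem stmt_3 (T H K : ℝ) (hT : 0 < T) (hH : H ∈ Set.Ioo (0:ℝ) 1) (hK : 0 < K)
    (φ φ' : ℝ → ℝ)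
    (hderiv : ∀ u ∈ Set.Ioc (0:ℝ) (2*T), HasDerivAt φ (φ' u) u)
    (hbound : ∀ u ∈ Set.Ioc (0:ℝ) (2*T), |φ' u| ≤ K * u ^ (H - 3/2)) :
    ∃ C > 0, ∀ h ∈ Set.Ioc (0:ℝ) T,
      (∫ t in Set.Ioc (0:ℝ) T, (φ (t + h) - φ t)^2) ^ ((1:ℝ)/2) ≤ C * h ^ H :=
  stmt_3_general T H K hH hK φ φ' hderiv hbound
end

section
/- Let T > 0, Ĥ ∈ (0,1), K > 0, and let φ̂ : (0,2T] → ℝ be differentiable on (0,2T] with |φ̂(u)| ≤ K u^{Ĥ−1/2} and |φ̂′(u)| ≤ K u^{Ĥ−3/2} for all u ∈ (0,2T]. Then there exists a constant C > 0, depending only on T, Ĥ and K, such that for all h ∈ (0,T], (∫₀^h φ̂(t)² dt)^{1/2} ≤ C h^{Ĥ} and (∫₀^T (φ̂(t+h) − φ̂(t))² dt)^{1/2} ≤ C h^{Ĥ}. -/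
/-!
Split `(0, T]` at `h`. On `(0, h]` the two values are bounded separately,
`(φ̂(t+h) - φ̂(t))² ≤ 2K²((t+h)^(2Ĥ-1) + t^(2Ĥ-1))`, which integrates to a multiple of `h^(2Ĥ)`
because `2Ĥ - 1 > -1`. On `(h, T]` the mean value theorem and the monotonicity of `u^(Ĥ-3/2)` give
`|φ̂(t+h) - φ̂(t)| ≤ K h t^(Ĥ-3/2)`, and `∫_h^∞ h² t^(2Ĥ-3) dt = h^(2Ĥ) / (2 - 2Ĥ)`.
-/

open MeasureTheory Set

lemma sq_le_sq_mul_rpow_of_abs_le {x c u a : ℝ} (hu : 0 ≤ u) (h : |x| ≤ c * u ^ a) :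
    x ^ 2 ≤ c ^ 2 * u ^ (2 * a) := by
  calc x ^ 2 = |x| ^ 2 := (sq_abs x).symm
    _ ≤ (c * u ^ a) ^ 2 := pow_le_pow_left₀ (abs_nonneg x) h 2
    _ = c ^ 2 * u ^ (2 * a) := by rw [mul_pow, ← Real.rpow_mul_natCast hu]; norm_num [mul_comm]

lemma rpow_one_half_le_of_le_mul_rpow {x D h a : ℝ} (hx : 0 ≤ x) (hD : 0 ≤ D) (hh : 0 ≤ h)
    (hle : x ≤ D * h ^ (2 * a)) : x ^ ((1 : ℝ) / 2) ≤ D ^ ((1 : ℝ) / 2) * h ^ a := by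
  calc x ^ ((1 : ℝ) / 2) ≤ (D * h ^ (2 * a)) ^ ((1 : ℝ) / 2) :=
        Real.rpow_le_rpow hx hle (by norm_num)
    _ = D ^ ((1 : ℝ) / 2) * h ^ a := by
        rw [Real.mul_rpow hD (by positivity), ← Real.rpow_mul hh]; ring_nf

lemma integrableOn_Ioc_zero_rpow_add {b c e : ℝ} (hb : 0 ≤ b) (he : -1 < e) :
    IntegrableOn (fun t : ℝ => (t + c) ^ e) (Ioc 0 b) := by
  have := (intervalIntegral.intervalIntegrable_rpow' he (a := c) (b := b + c)).comp_add_right c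
  simp only [sub_self, add_sub_cancel_right] at this
  exact (intervalIntegrable_iff_integrableOn_Ioc_of_le hb).1 this

lemma integrableOn_Ioc_zero_rpow {b e : ℝ} (hb : 0 ≤ b) (he : -1 < e) :
    IntegrableOn (fun t : ℝ => t ^ e) (Ioc 0 b) := by
  simpa using integrableOn_Ioc_zero_rpow_add (c := 0) hb he

lemma integral_Ioc_zero_rpow_add {b c e : ℝ} (hb : 0 ≤ b) (he : -1 < e) :
    ∫ t in Ioc 0 b, (t + c) ^ e = ((b + c) ^ (e + 1) - c ^ (e + 1)) / (e + 1) := by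
  rw [← intervalIntegral.integral_of_le hb, intervalIntegral.integral_comp_add_right
    (fun t : ℝ => t ^ e), integral_rpow (Or.inl he), zero_add]

lemma integral_Ioc_zero_rpow {b e : ℝ} (hb : 0 ≤ b) (he : -1 < e) :
    ∫ t in Ioc 0 b, t ^ e = b ^ (e + 1) / (e + 1) := by
  simpa [Real.zero_rpow (by linarith : e + 1 ≠ 0)] using
    integral_Ioc_zero_rpow_add (c := 0) hb he

lemma setIntegral_Ioc_rpow_le {a b e : ℝ} (ha : 0 < a) (he : e < -1) :
    ∫ t in Ioc a b, t ^ e ≤ -a ^ (e + 1) / (e + 1) := by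
  rw [← integral_Ioi_rpow_of_lt he ha]
  refine setIntegral_mono_set (integrableOn_Ioi_rpow_of_lt he ha) ?_
    Ioc_subset_Ioi_self.eventuallyLE
  exact ae_restrict_of_forall_mem measurableSet_Ioi fun t ht => Real.rpow_nonneg (ha.trans ht).le _

lemma setIntegral_Ioc_le_add {f g₁ g₂ : ℝ → ℝ} {a b c : ℝ} (hab : a ≤ b) (hbc : b ≤ c)
    (hf : ContinuousOn f (Ioc a c)) (hf₀ : ∀ t ∈ Ioc a c, 0 ≤ f t)
    (hg₁ : IntegrableOn g₁ (Ioc a b)) (hg₂ : IntegrableOn g₂ (Ioc b c))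
    (hfg₁ : ∀ t ∈ Ioc a b, f t ≤ g₁ t) (hfg₂ : ∀ t ∈ Ioc b c, f t ≤ g₂ t) :
    ∫ t in Ioc a c, f t ≤ (∫ t in Ioc a b, g₁ t) + ∫ t in Ioc b c, g₂ t := by
  have hsub₁ : Ioc a b ⊆ Ioc a c := Ioc_subset_Ioc_right hbc
  have hsub₂ : Ioc b c ⊆ Ioc a c := Ioc_subset_Ioc_left hab
  have hf_int : ∀ {s : Set ℝ} {g : ℝ → ℝ}, s ⊆ Ioc a c → MeasurableSet s → IntegrableOn g s →
      (∀ t ∈ s, f t ≤ g t) → IntegrableOn f s := fun hs hsm hg hfg =>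
    hg.mono' ((hf.mono hs).aestronglyMeasurable hsm) <| ae_restrict_of_forall_mem hsm fun t ht => by
      rw [Real.norm_eq_abs, abs_of_nonneg (hf₀ t (hs ht))]; exact hfg t ht
  rw [← Ioc_union_Ioc_eq_Ioc hab hbc, setIntegral_union (Ioc_disjoint_Ioc_of_le le_rfl)
    measurableSet_Ioc (hf_int hsub₁ measurableSet_Ioc hg₁ hfg₁)
    (hf_int hsub₂ measurableSet_Ioc hg₂ hfg₂)]
  exact add_le_add (setIntegral_mono_of_nonneg (fun t ht => hf₀ t (hsub₁ ht)) hfg₁ hg₁)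
    (setIntegral_mono_of_nonneg (fun t ht => hf₀ t (hsub₂ ht)) hfg₂ hg₂)

lemma integral_sq_le_of_abs_le_rpow {φ : ℝ → ℝ} {K H b : ℝ} (hH : 0 < H) (hb : 0 ≤ b)
    (hbound : ∀ u ∈ Ioc 0 b, |φ u| ≤ K * u ^ (H - 1 / 2)) :
    ∫ t in Ioc 0 b, φ t ^ 2 ≤ K ^ 2 / (2 * H) * b ^ (2 * H) := by
  have he : -1 < 2 * (H - 1 / 2) := by linarith
  calc ∫ t in Ioc 0 b, φ t ^ 2 ≤ ∫ t in Ioc 0 b, K ^ 2 * t ^ (2 * (H - 1 / 2)) :=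
        setIntegral_mono_of_nonneg (fun t _ => sq_nonneg _)
          (fun t ht => sq_le_sq_mul_rpow_of_abs_le ht.1.le (hbound t ht))
          ((integrableOn_Ioc_zero_rpow hb he).const_mul _)
    _ = K ^ 2 / (2 * H) * b ^ (2 * H) := by
        rw [integral_const_mul, integral_Ioc_zero_rpow hb he]; ring_nf

lemma abs_sub_le_mul_rpow_of_abs_deriv_le {φ φ' : ℝ → ℝ} {K a t h : ℝ} (ht : 0 < t) (hh : 0 ≤ h)
    (ha : a ≤ 0) (hderiv : ∀ u ∈ Icc t (t + h), HasDerivAt φ (φ' u) u)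
    (hbound : ∀ u ∈ Icc t (t + h), |φ' u| ≤ K * u ^ a) :
    |φ (t + h) - φ t| ≤ K * t ^ a * h := by
  have hK : 0 ≤ K := nonneg_of_mul_nonneg_left
    ((abs_nonneg _).trans (hbound t (left_mem_Icc.2 (by linarith)))) (Real.rpow_pos_of_pos ht a)
  have hmvt := (convex_Icc t (t + h)).norm_image_sub_le_of_norm_hasDerivWithin_le
    (fun u hu => (hderiv u hu).hasDerivWithinAt)
    (fun u hu => (hbound u hu).trans
      (mul_le_mul_of_nonneg_left (Real.rpow_le_rpow_of_nonpos ht hu.1 ha) hK))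
    (left_mem_Icc.2 (by linarith)) (right_mem_Icc.2 (by linarith))
  simpa [abs_of_nonneg hh] using hmvt

lemma integral_shift_majorant_le {K H T h : ℝ} (hH : H ∈ Ioo 0 1) (hh : 0 < h) :
    (∫ t in Ioc 0 h,
        (2 * K ^ 2 * (t + h) ^ (2 * (H - 1 / 2)) + 2 * K ^ 2 * t ^ (2 * (H - 1 / 2)))) +
        ∫ t in Ioc h T, (K * h) ^ 2 * t ^ (2 * (H - 3 / 2)) ≤
      K ^ 2 * (2 ^ (2 * H) / H + 1 / (2 - 2 * H)) * h ^ (2 * H) := by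
  obtain ⟨hH₀, hH₁⟩ := hH
  have he : -1 < 2 * (H - 1 / 2) := by linarith
  have he' : 2 * (H - 3 / 2) < -1 := by linarith
  calc _ ≤ 2 * K ^ 2 * (((h + h) ^ (2 * (H - 1 / 2) + 1) - h ^ (2 * (H - 1 / 2) + 1)) /
          (2 * (H - 1 / 2) + 1)) + 2 * K ^ 2 * (h ^ (2 * (H - 1 / 2) + 1) / (2 * (H - 1 / 2) + 1)) +
          (K * h) ^ 2 * (-h ^ (2 * (H - 3 / 2) + 1) / (2 * (H - 3 / 2) + 1)) := by
        rw [integral_add ((integrableOn_Ioc_zero_rpow_add hh.le he).const_mul _)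
            ((integrableOn_Ioc_zero_rpow hh.le he).const_mul _),
          integral_const_mul, integral_const_mul, integral_const_mul,
          integral_Ioc_zero_rpow_add hh.le he, integral_Ioc_zero_rpow hh.le he]
        gcongr
        exact setIntegral_Ioc_rpow_le hh he'
    _ = K ^ 2 * (2 ^ (2 * H) / H + 1 / (2 - 2 * H)) * h ^ (2 * H) := by
        have hsplit : h ^ (2 * H) = h ^ (2 * H - 2) * h ^ 2 := by
          rw [← Real.rpow_natCast, ← Real.rpow_add hh]; norm_num
        rw [← two_mul, Real.mul_rpow zero_le_two hh.le, show 2 * (H - 1 / 2) + 1 = 2 * H by ring,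
          show 2 * (H - 3 / 2) + 1 = 2 * H - 2 by ring, hsplit]
        have h₁ : H - 1 ≠ 0 := by linarith
        have h₂ : 2 - 2 * H ≠ 0 := by linarith
        field_simp
        ring

lemma integral_sq_sub_shift_le {φ φ' : ℝ → ℝ} {K H T h : ℝ} (hH : H ∈ Ioo 0 1) (hh : 0 < h)
    (hhT : h ≤ T) (hderiv : ∀ u ∈ Ioc 0 (T + h), HasDerivAt φ (φ' u) u)
    (hbound : ∀ u ∈ Ioc 0 (T + h), |φ u| ≤ K * u ^ (H - 1 / 2))
    (hbound' : ∀ u ∈ Ioc 0 (T + h), |φ' u| ≤ K * u ^ (H - 3 / 2)) :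
    ∫ t in Ioc 0 T, (φ (t + h) - φ t) ^ 2 ≤
      K ^ 2 * (2 ^ (2 * H) / H + 1 / (2 - 2 * H)) * h ^ (2 * H) := by
  have he : -1 < 2 * (H - 1 / 2) := by linarith [hH.1]
  have hφ : ContinuousOn φ (Ioc 0 (T + h)) := fun u hu =>
    (hderiv u hu).continuousAt.continuousWithinAt
  have hcont : ContinuousOn (fun t => (φ (t + h) - φ t) ^ 2) (Ioc 0 T) :=
    ((hφ.comp (continuous_add_const h).continuousOn fun t ht => ⟨by linarith [ht.1],
      by linarith [ht.2]⟩).sub (hφ.mono (Ioc_subset_Ioc_right (by linarith)))).pow 2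
  have hnear : ∀ t ∈ Ioc 0 h, (φ (t + h) - φ t) ^ 2 ≤
      2 * K ^ 2 * (t + h) ^ (2 * (H - 1 / 2)) + 2 * K ^ 2 * t ^ (2 * (H - 1 / 2)) := by
    intro t ht
    have h₁ := sq_le_sq_mul_rpow_of_abs_le (by linarith [ht.1])
      (hbound (t + h) ⟨by linarith [ht.1], by linarith [ht.2]⟩)
    have h₂ := sq_le_sq_mul_rpow_of_abs_le ht.1.le (hbound t ⟨ht.1, by linarith [ht.2]⟩)
    nlinarith [sq_nonneg (φ (t + h) + φ t)]
  have hfar : ∀ t ∈ Ioc h T, (φ (t + h) - φ t) ^ 2 ≤ (K * h) ^ 2 * t ^ (2 * (H - 3 / 2)) := by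
    intro t ht
    have ht₀ : 0 < t := hh.trans ht.1
    have hIcc : ∀ u ∈ Icc t (t + h), u ∈ Ioc 0 (T + h) := fun u hu =>
      ⟨ht₀.trans_le hu.1, by linarith [hu.2, ht.2]⟩
    refine sq_le_sq_mul_rpow_of_abs_le ht₀.le ?_
    have := abs_sub_le_mul_rpow_of_abs_deriv_le ht₀ hh.le (by linarith [hH.2])
      (fun u hu => hderiv u (hIcc u hu)) (fun u hu => hbound' u (hIcc u hu))
    linarith
  refine (setIntegral_Ioc_le_add hh.le hhT hcont (fun t _ => sq_nonneg _) ?_ ?_ hnear hfar).trans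
    (integral_shift_majorant_le hH hh)
  · exact ((integrableOn_Ioc_zero_rpow_add hh.le he).const_mul _).add
      ((integrableOn_Ioc_zero_rpow hh.le he).const_mul _)
  · exact ((integrableOn_Ioi_rpow_of_lt (by linarith [hH.2]) hh).mono_set
      Ioc_subset_Ioi_self).const_mul _

theorem stmt_4_general (T Hhat K : ℝ) (hH : Hhat ∈ Set.Ioo (0:ℝ) 1) (hK : 0 < K)
    (φhat φhat' : ℝ → ℝ)
    (hderiv : ∀ u ∈ Set.Ioc (0:ℝ) (2*T), HasDerivAt φhat (φhat' u) u)
    (hbound : ∀ u ∈ Set.Ioc (0:ℝ) (2*T), |φhat u| ≤ K * u ^ (Hhat - 1/2))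
    (hbound' : ∀ u ∈ Set.Ioc (0:ℝ) (2*T), |φhat' u| ≤ K * u ^ (Hhat - 3/2)) :
    ∃ C > 0, ∀ h ∈ Set.Ioc (0:ℝ) T,
      (∫ t in Set.Ioc (0:ℝ) h, (φhat t)^2) ^ ((1:ℝ)/2) ≤ C * h ^ Hhat ∧
      (∫ t in Set.Ioc (0:ℝ) T, (φhat (t + h) - φhat t)^2) ^ ((1:ℝ)/2) ≤ C * h ^ Hhat := by
  set D := max (K ^ 2 / (2 * Hhat)) (K ^ 2 * (2 ^ (2 * Hhat) / Hhat + 1 / (2 - 2 * Hhat)))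
  have hD : 0 < D := lt_max_of_lt_left (by have := hH.1; positivity)
  refine ⟨D ^ ((1 : ℝ) / 2), by positivity, fun h ⟨hh, hhT⟩ => ⟨?_, ?_⟩⟩
  · have hsub : Ioc 0 h ⊆ Ioc 0 (2 * T) := Ioc_subset_Ioc_right (by linarith)
    refine rpow_one_half_le_of_le_mul_rpow (integral_nonneg fun _ => sq_nonneg _) hD.le hh.le ?_
    refine (integral_sq_le_of_abs_le_rpow hH.1 hh.le fun u hu => hbound u (hsub hu)).trans ?_
    gcongr; exact le_max_left _ _
  · have hsub : Ioc 0 (T + h) ⊆ Ioc 0 (2 * T) := Ioc_subset_Ioc_right (by linarith)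
    refine rpow_one_half_le_of_le_mul_rpow (integral_nonneg fun _ => sq_nonneg _) hD.le hh.le ?_
    refine (integral_sq_sub_shift_le hH hh hhT (fun u hu => hderiv u (hsub hu))
      (fun u hu => hbound u (hsub hu)) (fun u hu => hbound' u (hsub hu))).trans ?_
    gcongr; exact le_max_right _ _

/-- Lemma 3.2 of the paper. -/
theorem stmt_4 (T Hhat K : ℝ) (hT : 0 < T) (hH : Hhat ∈ Set.Ioo (0:ℝ) 1) (hK : 0 < K)
    (φhat φhat' : ℝ → ℝ)
    (hderiv : ∀ u ∈ Set.Ioc (0:ℝ) (2*T), HasDerivAt φhat (φhat' u) u)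
    (hbound : ∀ u ∈ Set.Ioc (0:ℝ) (2*T), |φhat u| ≤ K * u ^ (Hhat - 1/2))
    (hbound' : ∀ u ∈ Set.Ioc (0:ℝ) (2*T), |φhat' u| ≤ K * u ^ (Hhat - 3/2)) :
    ∃ C > 0, ∀ h ∈ Set.Ioc (0:ℝ) T,
      (∫ t in Set.Ioc (0:ℝ) h, (φhat t)^2) ^ ((1:ℝ)/2) ≤ C * h ^ Hhat ∧
      (∫ t in Set.Ioc (0:ℝ) T, (φhat (t + h) - φhat t)^2) ^ ((1:ℝ)/2) ≤ C * h ^ Hhat :=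
  stmt_4_general T Hhat K hH hK φhat φhat' hderiv hbound hbound'
end

section
/- Let α < 1 be a real number, and let x, y, x′, y′ be real numbers with 0 < x < y, 0 ≤ x′ < x, and y′ ≤ x′. Then |y^α − x^α| ≤ |(y − y′)^α − (x − x′)^α|. -/
/-! Write `t = (y - y') - (x - x') ≥ y - x`. Since `u ↦ u ^ α` is monotone, enlarging the step from
`y - x` to `t` can only move `(x + t) ^ α` further from `x ^ α`; and for `α ≤ 1` the increment
`|(s + t) ^ α - s ^ α|` is antitone in `s > 0`, because its derivative has the sign of
`α ^ 2 ((s + t) ^ (α - 1) - s ^ (α - 1)) ≤ 0`. Shrinking the base from `x` to `x - x'` thus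
increases it further. -/

open Set

namespace Real

lemma abs_rpow_sub_rpow_le_of_le {α s u v : ℝ} (hs : 0 < s) (hsu : s ≤ u) (huv : u ≤ v) :
    |u ^ α - s ^ α| ≤ |v ^ α - s ^ α| := by
  refine abs_sub_left_of_mem_uIcc ?_
  rcases le_total 0 α with hα | hα
  · exact Icc_subset_uIcc ⟨rpow_le_rpow hs.le hsu hα, rpow_le_rpow (hs.le.trans hsu) huv hα⟩
  · exact Icc_subset_uIcc'
      ⟨rpow_le_rpow_of_nonpos (hs.trans_le hsu) huv hα, rpow_le_rpow_of_nonpos hs hsu hα⟩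

lemma mul_rpow_add_sub_rpow_nonneg {α s t : ℝ} (hs : 0 < s) (ht : 0 ≤ t) :
    0 ≤ α * ((s + t) ^ α - s ^ α) := by
  have hst : s ≤ s + t := le_add_of_nonneg_right ht
  rcases le_total 0 α with hα | hα
  · exact mul_nonneg hα (sub_nonneg.2 (rpow_le_rpow hs.le hst hα))
  · exact mul_nonneg_of_nonpos_of_nonpos hα (sub_nonpos.2 (rpow_le_rpow_of_nonpos hs hst hα))

lemma hasDerivAt_rpow_add_sub_rpow (α t : ℝ) {s : ℝ} (hs : 0 < s) (ht : 0 ≤ t) :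
    HasDerivAt (fun s ↦ (s + t) ^ α - s ^ α) (α * (s + t) ^ (α - 1) - α * s ^ (α - 1)) s := by
  have hshift : HasDerivAt (fun s ↦ (s + t) ^ α) (α * (s + t) ^ (α - 1)) s := by
    simpa using (hasDerivAt_id s).add_const t |>.rpow_const (p := α) (Or.inl (by positivity))
  exact hshift.sub (hasDerivAt_rpow_const (Or.inl hs.ne'))

/-- Multiplying by `α` makes the increment nonnegative whatever the sign of `α`. -/
lemma antitoneOn_mul_rpow_add_sub_rpow {α t : ℝ} (hα : α ≤ 1) (ht : 0 ≤ t) :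
    AntitoneOn (fun s ↦ α * ((s + t) ^ α - s ^ α)) (Ioi 0) := by
  refine antitoneOn_of_hasDerivWithinAt_nonpos (convex_Ioi 0)
    (f' := fun s ↦ α * (α * (s + t) ^ (α - 1) - α * s ^ (α - 1))) ?_ ?_ ?_
  · exact fun s hs ↦ ((hasDerivAt_rpow_add_sub_rpow α t hs ht).const_mul α).continuousAt
      |>.continuousWithinAt
  · rw [interior_Ioi]
    exact fun s hs ↦ ((hasDerivAt_rpow_add_sub_rpow α t hs ht).const_mul α).hasDerivWithinAt
  · rw [interior_Ioi]
    intro s hs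
    have hpow : (s + t) ^ (α - 1) ≤ s ^ (α - 1) :=
      rpow_le_rpow_of_nonpos hs (le_add_of_nonneg_right ht) (by linarith)
    calc α * (α * (s + t) ^ (α - 1) - α * s ^ (α - 1))
        = α ^ 2 * ((s + t) ^ (α - 1) - s ^ (α - 1)) := by ring
      _ ≤ 0 := mul_nonpos_of_nonneg_of_nonpos (sq_nonneg α) (sub_nonpos.2 hpow)

lemma antitoneOn_abs_rpow_add_sub_rpow {α t : ℝ} (hα : α ≤ 1) (ht : 0 ≤ t) :
    AntitoneOn (fun s ↦ |(s + t) ^ α - s ^ α|) (Ioi 0) := by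
  intro a ha b hb hab
  rcases eq_or_ne α 0 with rfl | hα0
  · simp
  have hdiv : ∀ s ∈ Ioi (0 : ℝ), |(s + t) ^ α - s ^ α| = α * ((s + t) ^ α - s ^ α) / |α| := by
    intro s hs
    rw [eq_div_iff (abs_ne_zero.2 hα0), mul_comm, ← abs_mul,
      abs_of_nonneg (mul_rpow_add_sub_rpow_nonneg hs ht)]
  simp only [hdiv a ha, hdiv b hb]
  exact div_le_div_of_nonneg_right (antitoneOn_mul_rpow_add_sub_rpow hα ht ha hb hab)
    (abs_nonneg α)

end Real

/-- Lemma A.1 of the paper. -/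
theorem stmt_5 (α x y x' y' : ℝ) (hα : α < 1) (hx : 0 < x) (hxy : x < y)
    (hx'0 : 0 ≤ x') (hx'x : x' < x) (hy' : y' ≤ x') :
    |y ^ α - x ^ α| ≤ |(y - y') ^ α - (x - x') ^ α| := by
  have ht : 0 ≤ (y - y') - (x - x') := by linarith
  calc |y ^ α - x ^ α| ≤ |(x + ((y - y') - (x - x'))) ^ α - x ^ α| :=
        Real.abs_rpow_sub_rpow_le_of_le hx hxy.le (by linarith)
    _ ≤ |((x - x') + ((y - y') - (x - x'))) ^ α - (x - x') ^ α| :=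
        Real.antitoneOn_abs_rpow_add_sub_rpow hα.le ht (sub_pos.2 hx'x) hx (sub_le_self _ hx'0)
    _ = |(y - y') ^ α - (x - x') ^ α| := by rw [add_sub_cancel]
end

section
/- Let α ∈ (−1/2, 1/2) and M > 0. For integers n ≥ 1 and real numbers 0 ≤ v ≤ s, define A_n(v,s) = n^{2α+1} ∫₀^{⌊nv⌋/n} ((s − u)^α − (⌊ns⌋/n − u)^α)((v − u)^α − (⌊nv⌋/n − u)^α) du, where ⌊·⌋ denotes the floor function. Then sup over all n ≥ 1 and all 0 ≤ v ≤ s ≤ M of |A_n(v,s)| is finite; in fact |A_n(v,s)| ≤ ∫₀^∞ ((z+1)^α − z^α)² dz for all such n, v, s. -/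
/-!
Substituting `u = t / n` turns `A_n(v,s)` into
`∫₀^⌊nv⌋ ((ns - t)^α - (⌊ns⌋ - t)^α) ((nv - t)^α - (⌊nv⌋ - t)^α) dt`.
For `z = ⌊nv⌋ - t > 0` both factors are increments of `x ↦ x^α` over intervals of length at most
one lying to the right of `z`. For `α ≤ 1` such increments shrink in absolute value as the interval
moves right, so each factor is at most `|(z+1)^α - z^α|` and `|A_n(v,s)| ≤ ∫₀^⌊nv⌋ ((z+1)^α - z^α)² dz`.
The integrand is `O(z^{2α})` at `0` and `O(z^{2α-2})` at `∞`, hence integrable on `(0, ∞)` for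
`|α| < 1/2`.
-/

open MeasureTheory Set

/-- The quantity `A_n(v,s)` from Lemma A.2 of the paper. -/
noncomputable def A (α : ℝ) (n : ℕ) (v s : ℝ) : ℝ :=
  (n : ℝ) ^ (2*α + 1) *
    ∫ u in Set.Ioc (0:ℝ) ((⌊(n:ℝ) * v⌋ : ℝ) / n),
      ((s - u) ^ α - ((⌊(n:ℝ) * s⌋ : ℝ) / n - u) ^ α) *
        ((v - u) ^ α - ((⌊(n:ℝ) * v⌋ : ℝ) / n - u) ^ α)

lemma rpow_sq {x : ℝ} (hx : 0 ≤ x) (y : ℝ) : (x ^ y) ^ 2 = x ^ (y * 2) := by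
  rw [Real.rpow_mul hx, Real.rpow_two]

section RpowIncrement

variable {α : ℝ}

lemma mul_rpow_sub_rpow_nonneg {x y : ℝ} (hx : 0 < x) (hxy : x ≤ y) :
    0 ≤ α * (y ^ α - x ^ α) := by
  rcases le_or_gt 0 α with hα | hα
  · exact mul_nonneg hα (sub_nonneg.2 (Real.rpow_le_rpow hx.le hxy hα))
  · exact mul_nonneg_of_nonpos_of_nonpos hα.le
      (sub_nonpos.2 (Real.rpow_le_rpow_of_nonpos hx hxy hα.le))

/-- Since `α * (y ^ α - x ^ α) ≥ 0`, increments of `x ↦ x ^ α` compare in absolute value as they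
compare after multiplication by `α`. -/
lemma abs_rpow_sub_rpow_le_of_mul_le {x y x' y' : ℝ} (hx : 0 < x) (hxy : x ≤ y) (hx' : 0 < x')
    (hxy' : x' ≤ y') (h : α * (y ^ α - x ^ α) ≤ α * (y' ^ α - x' ^ α)) :
    |y ^ α - x ^ α| ≤ |y' ^ α - x' ^ α| := by
  rcases eq_or_ne α 0 with rfl | hα
  · simp
  rwa [← mul_le_mul_iff_right₀ (abs_pos.2 hα), ← abs_mul, ← abs_mul,
    abs_of_nonneg (mul_rpow_sub_rpow_nonneg hx hxy),
    abs_of_nonneg (mul_rpow_sub_rpow_nonneg hx' hxy')]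

lemma abs_rpow_sub_rpow_le_of_le {x y w : ℝ} (hx : 0 < x) (hxy : x ≤ y) (hyw : y ≤ w) :
    |y ^ α - x ^ α| ≤ |w ^ α - x ^ α| :=
  abs_rpow_sub_rpow_le_of_mul_le hx hxy hx (hxy.trans hyw) <| by
    linear_combination mul_rpow_sub_rpow_nonneg (hx.trans_le hxy) hyw

lemma antitoneOn_mul_rpow_add_one_sub_rpow (hα : α ≤ 1) :
    AntitoneOn (fun z : ℝ => α * ((z + 1) ^ α - z ^ α)) (Ioi 0) := by
  have hderiv : ∀ z : ℝ, 0 < z → HasDerivAt (fun z : ℝ => α * ((z + 1) ^ α - z ^ α))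
      (α ^ 2 * ((z + 1) ^ (α - 1) - z ^ (α - 1))) z := fun z hz =>
    ((((hasDerivAt_id' z).add_const 1).rpow_const (Or.inl (by positivity))).sub
      (Real.hasDerivAt_rpow_const (Or.inl hz.ne'))).const_mul α |>.congr_deriv (by ring)
  refine antitoneOn_of_hasDerivWithinAt_nonpos (convex_Ioi 0)
    (f' := fun z => α ^ 2 * ((z + 1) ^ (α - 1) - z ^ (α - 1)))
    (fun z hz => (hderiv z hz).continuousAt.continuousWithinAt) (fun z hz => ?_) (fun z hz => ?_)
  · rw [interior_Ioi] at hz ⊢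
    exact (hderiv z hz).hasDerivWithinAt
  · rw [interior_Ioi] at hz
    exact mul_nonpos_of_nonneg_of_nonpos (sq_nonneg α)
      (sub_nonpos.2 (Real.rpow_le_rpow_of_nonpos hz (by linarith) (by linarith)))

lemma abs_rpow_sub_rpow_le_abs_rpow_add_one_sub_rpow (hα : α ≤ 1) {x y z : ℝ} (hz : 0 < z)
    (hzy : z ≤ y) (hyx : y ≤ x) (hxy : x ≤ y + 1) :
    |x ^ α - y ^ α| ≤ |(z + 1) ^ α - z ^ α| := by
  have hy : 0 < y := hz.trans_le hzy
  calc |x ^ α - y ^ α| ≤ |(y + 1) ^ α - y ^ α| := abs_rpow_sub_rpow_le_of_le hy hyx hxy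
    _ ≤ |(z + 1) ^ α - z ^ α| :=
      abs_rpow_sub_rpow_le_of_mul_le hy (by linarith) hz (by linarith)
        (antitoneOn_mul_rpow_add_one_sub_rpow hα hz hy hzy)

lemma abs_rpow_add_one_sub_rpow_le (hα : α ≤ 1) {z : ℝ} (hz : 0 < z) :
    |(z + 1) ^ α - z ^ α| ≤ |α| * z ^ (α - 1) := by
  obtain ⟨c, ⟨hzc, hc⟩, hslope⟩ := exists_hasDerivAt_eq_slope (fun x : ℝ => x ^ α)
    (fun x => α * x ^ (α - 1)) (lt_add_one z)
    (fun x hx => (Real.continuousAt_rpow_const x α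
      (Or.inl (hz.trans_le hx.1).ne')).continuousWithinAt)
    (fun x hx => Real.hasDerivAt_rpow_const (Or.inl (hz.trans hx.1).ne'))
  have hc0 : 0 < c := hz.trans hzc
  rw [add_sub_cancel_left, div_one] at hslope
  rw [← hslope, abs_mul, abs_of_pos (Real.rpow_pos_of_pos hc0 _)]
  exact mul_le_mul_of_nonneg_left (Real.rpow_le_rpow_of_nonpos hz hzc.le (by linarith))
    (abs_nonneg α)

lemma integrableOn_sq_rpow_add_one_sub_rpow (hα : α ∈ Ioo (-(1:ℝ)/2) (1/2)) :
    IntegrableOn (fun z : ℝ => ((z + 1) ^ α - z ^ α) ^ 2) (Ioi 0) := by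
  obtain ⟨hα₀, hα₁⟩ := hα
  have hmeas : AEStronglyMeasurable (fun z : ℝ => ((z + 1) ^ α - z ^ α) ^ 2) :=
    (by fun_prop : Measurable fun z : ℝ => ((z + 1) ^ α - z ^ α) ^ 2).aestronglyMeasurable
  rw [← Ioc_union_Ioi_eq_Ioi zero_le_one]
  refine IntegrableOn.union ?_ ?_
  · refine Integrable.mono' (g := fun z => (z + 1) ^ (α * 2) + z ^ (α * 2)) ?_ hmeas.restrict ?_
    · refine Integrable.add ?_ ?_
      · refine (ContinuousOn.integrableOn_Icc ?_).mono_set Ioc_subset_Icc_self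
        exact (continuousOn_id.add continuousOn_const).rpow_const
          fun x hx => Or.inl (by linarith [hx.1] : (0:ℝ) < x + 1).ne'
      · exact (intervalIntegrable_iff_integrableOn_Ioc_of_le zero_le_one).mp
          (intervalIntegral.intervalIntegrable_rpow' (by linarith))
    · filter_upwards [ae_restrict_mem measurableSet_Ioc] with z hz
      have hz : 0 < z := hz.1
      have ha := Real.rpow_nonneg (by linarith : (0:ℝ) ≤ z + 1) α
      have hb := Real.rpow_nonneg hz.le α
      rw [Real.norm_of_nonneg (sq_nonneg _), ← rpow_sq (by linarith), ← rpow_sq hz.le]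
      nlinarith [mul_nonneg ha hb]
  · refine Integrable.mono' (g := fun z => α ^ 2 * z ^ ((α - 1) * 2))
      ((integrableOn_Ioi_rpow_of_lt (by linarith) zero_lt_one).const_mul _) hmeas.restrict ?_
    filter_upwards [ae_restrict_mem measurableSet_Ioi] with z hz
    have hz : 0 < z := zero_lt_one.trans hz
    rw [Real.norm_of_nonneg (sq_nonneg _), ← sq_abs, ← rpow_sq hz.le, ← sq_abs α, ← mul_pow]
    exact pow_le_pow_left₀ (abs_nonneg _) (abs_rpow_add_one_sub_rpow_le (by linarith) hz) 2

end RpowIncrement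

lemma A_eq_intervalIntegral (α : ℝ) {n : ℕ} (hn : 0 < n) {v s : ℝ} (hv : 0 ≤ v) (hvs : v ≤ s) :
    A α n v s = ∫ t in (0:ℝ)..⌊(n:ℝ) * v⌋,
      ((n * s - t) ^ α - (⌊(n:ℝ) * s⌋ - t) ^ α) * ((n * v - t) ^ α - (⌊(n:ℝ) * v⌋ - t) ^ α) := by
  set N : ℝ := (n : ℝ)
  set m : ℝ := (⌊N * v⌋ : ℝ)
  set k : ℝ := (⌊N * s⌋ : ℝ)
  have hN : 0 < N := Nat.cast_pos.2 hn
  have hm : 0 ≤ m := Int.cast_nonneg (Int.floor_nonneg.2 (by positivity))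
  have hmv : m ≤ N * v := Int.floor_le _
  have hmk : m ≤ k := Int.cast_le.2 (Int.floor_le_floor (by gcongr))
  have hrescale : EqOn
      (fun t => N ^ (2 * α) * (((s - t / N) ^ α - (k / N - t / N) ^ α) *
        ((v - t / N) ^ α - (m / N - t / N) ^ α)))
      (fun t => ((N * s - t) ^ α - (k - t) ^ α) * ((N * v - t) ^ α - (m - t) ^ α)) (uIcc 0 m) := by
    intro t ht
    rw [uIcc_of_le hm] at ht
    obtain ⟨ht₀, htm⟩ := ht
    have hNvs : N * v ≤ N * s := by gcongr
    have hdiv : ∀ x : ℝ, x / N - t / N = (x - t) / N := fun x => (sub_div x t N).symm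
    have hs_sub : s - t / N = (N * s - t) / N := by field_simp
    have hv_sub : v - t / N = (N * v - t) / N := by field_simp
    simp only [hs_sub, hv_sub, hdiv]
    rw [Real.div_rpow (by linarith) hN.le, Real.div_rpow (by linarith) hN.le,
      Real.div_rpow (by linarith) hN.le, Real.div_rpow (by linarith) hN.le,
      two_mul, Real.rpow_add hN]
    field_simp
  unfold A
  calc N ^ (2 * α + 1) * ∫ u in Ioc 0 (m / N),
        ((s - u) ^ α - (k / N - u) ^ α) * ((v - u) ^ α - (m / N - u) ^ α)
      = N ^ (2 * α) * ∫ t in (0:ℝ)..m,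
          ((s - t / N) ^ α - (k / N - t / N) ^ α) * ((v - t / N) ^ α - (m / N - t / N) ^ α) := by
        rw [← intervalIntegral.integral_of_le (by positivity),
          intervalIntegral.integral_comp_div (fun u =>
            ((s - u) ^ α - (k / N - u) ^ α) * ((v - u) ^ α - (m / N - u) ^ α)) hN.ne',
          zero_div, smul_eq_mul, Real.rpow_add_one hN.ne', mul_assoc]
    _ = _ := by
        rw [← intervalIntegral.integral_const_mul]
        exact intervalIntegral.integral_congr hrescale

lemma abs_A_le {α : ℝ} (hα : α ∈ Ioo (-(1:ℝ)/2) (1/2)) {n : ℕ} (hn : 0 < n) {v s : ℝ}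
    (hv : 0 ≤ v) (hvs : v ≤ s) :
    |A α n v s| ≤ ∫ z in Ioi (0:ℝ), ((z + 1) ^ α - z ^ α) ^ 2 := by
  rw [A_eq_intervalIntegral α hn hv hvs, ← Real.norm_eq_abs]
  set N : ℝ := (n : ℝ)
  set m : ℝ := (⌊N * v⌋ : ℝ)
  set k : ℝ := (⌊N * s⌋ : ℝ)
  set g : ℝ → ℝ := fun z => ((z + 1) ^ α - z ^ α) ^ 2
  have hm : 0 ≤ m := Int.cast_nonneg (Int.floor_nonneg.2 (by positivity))
  have hmv : m ≤ N * v := Int.floor_le _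
  have hvm : N * v < m + 1 := Int.lt_floor_add_one _
  have hks : k ≤ N * s := Int.floor_le _
  have hsk : N * s < k + 1 := Int.lt_floor_add_one _
  have hmk : m ≤ k := Int.cast_le.2 (Int.floor_le_floor (by gcongr))
  have hg : IntegrableOn g (Ioi 0) := integrableOn_sq_rpow_add_one_sub_rpow hα
  have hg_reflect : IntervalIntegrable (fun t => g (m - t)) volume 0 m := by
    have := ((intervalIntegrable_iff_integrableOn_Ioc_of_le hm).2
      (hg.mono_set Ioc_subset_Ioi_self)).comp_sub_left m
    simpa using this.symm
  have hpointwise : ∀ᵐ t, t ∈ Ioc 0 m →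
      ‖((N * s - t) ^ α - (k - t) ^ α) * ((N * v - t) ^ α - (m - t) ^ α)‖ ≤ g (m - t) := by
    filter_upwards [Measure.ae_ne volume m] with t htm ht
    have hz : 0 < m - t := sub_pos.2 (lt_of_le_of_ne ht.2 htm)
    have hα₁ : α ≤ 1 := by linarith [hα.2]
    rw [norm_mul, Real.norm_eq_abs, Real.norm_eq_abs, show g (m - t) = _ from sq _,
      ← abs_mul_abs_self]
    exact mul_le_mul
      (abs_rpow_sub_rpow_le_abs_rpow_add_one_sub_rpow hα₁ hz (by linarith) (by linarith)
        (by linarith))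
      (abs_rpow_sub_rpow_le_abs_rpow_add_one_sub_rpow hα₁ hz le_rfl (by linarith) (by linarith))
      (abs_nonneg _) (abs_nonneg _)
  calc _ ≤ ∫ t in (0:ℝ)..m, g (m - t) :=
        intervalIntegral.norm_integral_le_of_norm_le hm hpointwise hg_reflect
    _ = ∫ z in Ioc 0 m, g z := by
        rw [intervalIntegral.integral_comp_sub_left, sub_self, sub_zero,
          intervalIntegral.integral_of_le hm]
    _ ≤ ∫ z in Ioi 0, g z :=
        setIntegral_mono_set hg (Filter.Eventually.of_forall fun z => sq_nonneg _)
          Ioc_subset_Ioi_self.eventuallyLE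

theorem stmt_8_general (α M : ℝ) (hα : α ∈ Set.Ioo (-(1:ℝ)/2) (1/2)) :
    (∀ n : ℕ, 1 ≤ n → ∀ v s : ℝ, 0 ≤ v → v ≤ s → s ≤ M →
      |A α n v s| ≤ ∫ z in Set.Ioi (0:ℝ), ((z + 1) ^ α - z ^ α)^2) ∧
    BddAbove {x : ℝ | ∃ n : ℕ, ∃ v s : ℝ,
      1 ≤ n ∧ 0 ≤ v ∧ v ≤ s ∧ s ≤ M ∧ x = |A α n v s|} :=
  ⟨fun _ hn _ _ hv hvs _ => abs_A_le hα hn hv hvs,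
    ⟨_, by rintro x ⟨n, v, s, hn, hv, hvs, -, rfl⟩; exact abs_A_le hα hn hv hvs⟩⟩

/-- boundedness part of Lemma A.2. -/
theorem stmt_8 (α M : ℝ) (hα : α ∈ Set.Ioo (-(1:ℝ)/2) (1/2)) (hM : 0 < M) :
    (∀ n : ℕ, 1 ≤ n → ∀ v s : ℝ, 0 ≤ v → v ≤ s → s ≤ M →
      |A α n v s| ≤ ∫ z in Set.Ioi (0:ℝ), ((z + 1) ^ α - z ^ α)^2) ∧
    BddAbove {x : ℝ | ∃ n : ℕ, ∃ v s : ℝ,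
      1 ≤ n ∧ 0 ≤ v ∧ v ≤ s ∧ s ≤ M ∧ x = |A α n v s|} :=
  stmt_8_general α M hα
end

section
/- Let α ∈ (−1/2, 1/2) and let 0 ≤ v < s be real numbers. For integers n ≥ 1 define A_n(v,s) = n^{2α+1} ∫₀^{⌊nv⌋/n} ((s − u)^α − (⌊ns⌋/n − u)^α)((v − u)^α − (⌊nv⌋/n − u)^α) du, where ⌊·⌋ denotes the floor function. Then A_n(v,s) → 0 as n → ∞. -/
open MeasureTheory Set

/-!
The first factor of the integrand of `A α n v s` is `O(1/n)` uniformly in `u ≤ v`, because both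
`s - u` and `⌊ns⌋/n - u` stay at distance at least `(s - v)/2` from the singularity of `x ↦ x ^ α`.
The second factor has `L¹` norm `O(1/n)` on `[0, ⌊nv⌋/n]` when `α ≥ 0` (by the convexity of
`x ↦ x ^ (α + 1)`), and `O(1)` when `α < 0`. Hence `|A α n v s|` is `O(n ^ (2α - 1))`, resp.
`O(n ^ (2α))`, and both exponents are negative for `α ∈ (-1/2, 1/2)`.
-/

open Real Filter Topology intervalIntegral

noncomputable def gridFloor (n : ℕ) (x : ℝ) : ℝ := (⌊(n : ℝ) * x⌋ : ℝ) / n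

lemma gridFloor_nonneg (n : ℕ) {x : ℝ} (hx : 0 ≤ x) : 0 ≤ gridFloor n x := by
  unfold gridFloor; positivity

lemma gridFloor_le {n : ℕ} (hn : 0 < n) (x : ℝ) : gridFloor n x ≤ x := by
  rw [gridFloor, div_le_iff₀ (by positivity), mul_comm]
  exact Int.floor_le _

lemma sub_one_div_lt_gridFloor {n : ℕ} (hn : 0 < n) (x : ℝ) : x - 1 / n < gridFloor n x := by
  have hn' : (0 : ℝ) < n := by positivity
  rw [gridFloor, lt_div_iff₀ hn', sub_mul, one_div_mul_cancel hn'.ne', mul_comm]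
  exact Int.sub_one_lt_floor _

lemma abs_rpow_sub_rpow_le {α a x y : ℝ} (hα : α ≤ 1) (ha : 0 < a) (hax : a ≤ x) (hxy : x ≤ y) :
    |y ^ α - x ^ α| ≤ |α| * a ^ (α - 1) * (y - x) := by
  have hderiv : ∀ z ∈ Icc x y, HasDerivWithinAt (· ^ α) (α * z ^ (α - 1)) (Icc x y) z :=
    fun z hz ↦ (hasDerivAt_rpow_const (Or.inl (by linarith [hz.1]))).hasDerivWithinAt
  have hbound : ∀ z ∈ Icc x y, ‖α * z ^ (α - 1)‖ ≤ |α| * a ^ (α - 1) := by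
    intro z hz
    have hz₀ : 0 < z := by linarith [hz.1]
    rw [norm_mul, norm_of_nonneg (rpow_nonneg hz₀.le _), norm_eq_abs]
    exact mul_le_mul_of_nonneg_left
      (rpow_le_rpow_of_nonpos ha (by linarith [hz.1]) (by linarith)) (abs_nonneg α)
  simpa [abs_of_nonneg (sub_nonneg.2 hxy)] using
    (convex_Icc x y).norm_image_sub_le_of_norm_hasDerivWithin_le hderiv hbound
      (left_mem_Icc.2 hxy) (right_mem_Icc.2 hxy)

lemma rpow_sub_rpow_le_mul_sub {p x y : ℝ} (hp : 1 ≤ p) (hx : 0 ≤ x) (hxy : x ≤ y) :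
    y ^ p - x ^ p ≤ p * y ^ (p - 1) * (y - x) := by
  rcases hxy.eq_or_lt with rfl | hxy
  · simp
  have hslope := (convexOn_rpow hp).slope_le_of_hasDerivAt hx (hx.trans hxy.le : 0 ≤ y) hxy
    (hasDerivAt_rpow_const (Or.inr hp))
  rwa [slope_def_field, div_le_iff₀ (sub_pos.2 hxy)] at hslope

lemma intervalIntegrable_sub_rpow {α : ℝ} (hα : -1 < α) (c a b : ℝ) :
    IntervalIntegrable (fun u ↦ (c - u) ^ α) volume a b := by
  simpa using (intervalIntegrable_rpow' (a := c - a) (b := c - b) hα).comp_sub_left c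

lemma integral_sub_rpow {α : ℝ} (hα : -1 < α) (c m : ℝ) :
    ∫ u in 0..m, (c - u) ^ α = (c ^ (α + 1) - (c - m) ^ (α + 1)) / (α + 1) := by
  rw [integral_comp_sub_left (· ^ α), sub_zero, integral_rpow (Or.inl hα)]

lemma integral_abs_rpow_sub_rpow_le_of_nonneg {α m v : ℝ} (hα : 0 ≤ α) (hm : 0 ≤ m)
    (hmv : m ≤ v) : ∫ u in 0..m, |(v - u) ^ α - (m - u) ^ α| ≤ v ^ α * (v - m) := by
  have hα' : -1 < α := by linarith
  have hsign : EqOn (fun u ↦ |(v - u) ^ α - (m - u) ^ α|) (fun u ↦ (v - u) ^ α - (m - u) ^ α)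
      (uIcc 0 m) := by
    intro u hu
    rw [uIcc_of_le hm] at hu
    exact abs_of_nonneg (sub_nonneg.2 (rpow_le_rpow (by linarith [hu.2]) (by linarith) hα))
  have hconv := rpow_sub_rpow_le_mul_sub (p := α + 1) (by linarith) hm hmv
  rw [add_sub_cancel_right] at hconv
  have hrem : 0 ≤ (v - m) ^ (α + 1) := rpow_nonneg (by linarith) _
  rw [integral_congr hsign, integral_sub (intervalIntegrable_sub_rpow hα' _ _ _)
    (intervalIntegrable_sub_rpow hα' _ _ _), integral_sub_rpow hα', integral_sub_rpow hα',
    sub_self, zero_rpow (by linarith), ← sub_div, div_le_iff₀ (by linarith)]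
  linarith

lemma integral_abs_rpow_sub_rpow_le {α m v : ℝ} (hα : -1 < α) (hm : 0 ≤ m) (hmv : m ≤ v) :
    ∫ u in 0..m, |(v - u) ^ α - (m - u) ^ α| ≤ 2 * v ^ (α + 1) / (α + 1) := by
  have hv : 0 ≤ v := hm.trans hmv
  calc ∫ u in 0..m, |(v - u) ^ α - (m - u) ^ α|
      ≤ ∫ u in 0..m, ((v - u) ^ α + (m - u) ^ α) := by
        refine integral_mono_on hm
          ((intervalIntegrable_sub_rpow hα _ _ _).sub (intervalIntegrable_sub_rpow hα _ _ _)).abs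
          ((intervalIntegrable_sub_rpow hα _ _ _).add (intervalIntegrable_sub_rpow hα _ _ _))
          fun u hu ↦ ?_
        have hvu : 0 ≤ (v - u) ^ α := rpow_nonneg (by linarith [hu.2]) _
        have hmu : 0 ≤ (m - u) ^ α := rpow_nonneg (by linarith [hu.2]) _
        simpa [abs_of_nonneg hvu, abs_of_nonneg hmu] using abs_sub ((v - u) ^ α) ((m - u) ^ α)
    _ = (v ^ (α + 1) - (v - m) ^ (α + 1) + m ^ (α + 1)) / (α + 1) := by
        rw [integral_add (intervalIntegrable_sub_rpow hα _ _ _)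
          (intervalIntegrable_sub_rpow hα _ _ _), integral_sub_rpow hα, integral_sub_rpow hα,
          sub_self, zero_rpow (by linarith), sub_zero, add_div]
    _ ≤ 2 * v ^ (α + 1) / (α + 1) := by
        have hrem : 0 ≤ (v - m) ^ (α + 1) := rpow_nonneg (by linarith) _
        have hmono : m ^ (α + 1) ≤ v ^ (α + 1) := rpow_le_rpow hm hmv (by linarith)
        exact div_le_div_of_nonneg_right (by linarith) (by linarith)

lemma norm_A_le {α v s : ℝ} {n : ℕ} (hα₁ : -1 < α) (hα₂ : α ≤ 1) (hv : 0 ≤ v) (hn : 0 < n)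
    (hgap : 1 / (n : ℝ) ≤ (s - v) / 2) :
    ‖A α n v s‖ ≤ |α| * ((s - v) / 2) ^ (α - 1) *
      ((n : ℝ) ^ (2 * α) * ∫ u in 0..gridFloor n v, |(v - u) ^ α - (gridFloor n v - u) ^ α|) := by
  set m := gridFloor n v
  set t := gridFloor n s
  set K := |α| * ((s - v) / 2) ^ (α - 1)
  have hn' : (0 : ℝ) < n := by positivity
  have hK : 0 ≤ K := mul_nonneg (abs_nonneg α) (rpow_nonneg (by linarith [one_div_pos.2 hn']) _)
  have hm : 0 ≤ m := gridFloor_nonneg n hv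
  have hmv : m ≤ v := gridFloor_le hn v
  have hts : t ≤ s := gridFloor_le hn s
  have hst : s - 1 / n < t := sub_one_div_lt_gridFloor hn s
  have hfirst : ∀ u ∈ Ioc 0 m, ‖(s - u) ^ α - (t - u) ^ α‖ ≤ K / n := by
    intro u hu
    have hlip := abs_rpow_sub_rpow_le hα₂ (by linarith [one_div_pos.2 hn'])
      (by linarith [hu.2] : (s - v) / 2 ≤ t - u) (by linarith : t - u ≤ s - u)
    rw [norm_eq_abs, div_eq_mul_one_div K]
    calc _ ≤ K * (s - u - (t - u)) := hlip
      _ ≤ K * (1 / n) := mul_le_mul_of_nonneg_left (by linarith) hK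
  have hsecond : IntervalIntegrable (fun u ↦ (v - u) ^ α - (m - u) ^ α) volume 0 m :=
    (intervalIntegrable_sub_rpow hα₁ _ _ _).sub (intervalIntegrable_sub_rpow hα₁ _ _ _)
  have hintegral : ‖∫ u in Ioc 0 m, ((s - u) ^ α - (t - u) ^ α) * ((v - u) ^ α - (m - u) ^ α)‖
      ≤ K / n * ∫ u in 0..m, |(v - u) ^ α - (m - u) ^ α| := by
    rw [intervalIntegral.integral_of_le hm, ← MeasureTheory.integral_const_mul]
    refine norm_integral_le_of_norm_le ((hsecond.1.norm).const_mul _) ?_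
    filter_upwards [ae_restrict_mem measurableSet_Ioc] with u hu
    rw [norm_mul, ← norm_eq_abs]
    exact mul_le_mul_of_nonneg_right (hfirst u hu) (norm_nonneg _)
  calc ‖A α n v s‖
      = (n : ℝ) ^ (2 * α + 1) *
          ‖∫ u in Ioc 0 m, ((s - u) ^ α - (t - u) ^ α) * ((v - u) ^ α - (m - u) ^ α)‖ := by
        rw [A, norm_mul, norm_of_nonneg (by positivity)]; rfl
    _ ≤ (n : ℝ) ^ (2 * α + 1) * (K / n * ∫ u in 0..m, |(v - u) ^ α - (m - u) ^ α|) :=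
        mul_le_mul_of_nonneg_left hintegral (by positivity)
    _ = K * ((n : ℝ) ^ (2 * α) * ∫ u in 0..m, |(v - u) ^ α - (m - u) ^ α|) := by
        rw [rpow_add_one hn'.ne']
        field_simp

lemma tendsto_natCast_rpow_atTop_zero {γ : ℝ} (hγ : γ < 0) :
    Tendsto (fun n : ℕ ↦ (n : ℝ) ^ γ) atTop (𝓝 0) := by
  simpa only [neg_neg, Function.comp_def] using
    (tendsto_rpow_neg_atTop (neg_pos.2 hγ)).comp tendsto_natCast_atTop_atTop

lemma tendsto_rpow_mul_integral_abs_rpow_sub_rpow_gridFloor {α v : ℝ} (hα₁ : -1 < α)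
    (hα₂ : α < 1 / 2) (hv : 0 ≤ v) :
    Tendsto (fun n : ℕ ↦ (n : ℝ) ^ (2 * α) *
      ∫ u in 0..gridFloor n v, |(v - u) ^ α - (gridFloor n v - u) ^ α|) atTop (𝓝 0) := by
  have hnonneg : ∀ n : ℕ, 0 ≤ (n : ℝ) ^ (2 * α) *
      ∫ u in 0..gridFloor n v, |(v - u) ^ α - (gridFloor n v - u) ^ α| := fun n ↦
    mul_nonneg (rpow_nonneg n.cast_nonneg _)
      (integral_nonneg (gridFloor_nonneg n hv) fun u _ ↦ abs_nonneg _)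
  rcases le_or_gt 0 α with hα₀ | hα₀
  · have hrate := (tendsto_natCast_rpow_atTop_zero (by linarith : 2 * α - 1 < 0)).const_mul (v ^ α)
    rw [mul_zero] at hrate
    refine squeeze_zero' (.of_forall hnonneg) ?_ hrate
    filter_upwards [eventually_gt_atTop 0] with n hn
    have hn' : (0 : ℝ) < n := by positivity
    calc _ ≤ (n : ℝ) ^ (2 * α) * (v ^ α * (v - gridFloor n v)) := by
          gcongr
          exact integral_abs_rpow_sub_rpow_le_of_nonneg hα₀ (gridFloor_nonneg n hv)
            (gridFloor_le hn v)
      _ ≤ (n : ℝ) ^ (2 * α) * (v ^ α * (1 / n)) := by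
          gcongr
          linarith [sub_one_div_lt_gridFloor hn v]
      _ = v ^ α * (n : ℝ) ^ (2 * α - 1) := by
          rw [rpow_sub_one hn'.ne']
          field_simp
  · have hrate := (tendsto_natCast_rpow_atTop_zero (by linarith : 2 * α < 0)).mul_const
      (2 * v ^ (α + 1) / (α + 1))
    rw [zero_mul] at hrate
    refine squeeze_zero' (.of_forall hnonneg) ?_ hrate
    filter_upwards [eventually_gt_atTop 0] with n hn
    gcongr
    exact integral_abs_rpow_sub_rpow_le hα₁ (gridFloor_nonneg n hv) (gridFloor_le hn v)

/-- convergence part of Lemma A.2. -/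
theorem stmt_9 (α v s : ℝ) (hα : α ∈ Set.Ioo (-(1:ℝ)/2) (1/2))
    (hv : 0 ≤ v) (hvs : v < s) :
    Filter.Tendsto (fun n : ℕ => A α n v s) Filter.atTop (nhds 0) := by
  obtain ⟨hα₁, hα₂⟩ := hα
  have hgap : ∀ᶠ n : ℕ in atTop, 1 / (n : ℝ) ≤ (s - v) / 2 :=
    tendsto_one_div_atTop_nhds_zero_nat.eventually (eventually_le_nhds (by linarith))
  have hbound : ∀ᶠ n : ℕ in atTop, ‖A α n v s‖ ≤ |α| * ((s - v) / 2) ^ (α - 1) *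
      ((n : ℝ) ^ (2 * α) * ∫ u in 0..gridFloor n v, |(v - u) ^ α - (gridFloor n v - u) ^ α|) := by
    filter_upwards [eventually_gt_atTop 0, hgap] with n hn hn_gap
    exact norm_A_le (by linarith) (by linarith) hv hn hn_gap
  refine squeeze_zero_norm' hbound ?_
  simpa using (tendsto_rpow_mul_integral_abs_rpow_sub_rpow_gridFloor (by linarith) hα₂ hv).const_mul
    (|α| * ((s - v) / 2) ^ (α - 1))
end

section
/- Let α ∈ (0,1] and λ ∈ [α, 1]. Then for all real numbers 0 < s < t, one has s^{−α} − t^{−α} ≤ s^{−λ}(t − s)^{λ−α}. -/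
/-- key elementary inequality for the operator D (Lemma B). -/
theorem stmt_13 (α lam s t : ℝ) (hα : α ∈ Set.Ioc (0:ℝ) 1) (hlam : lam ∈ Set.Icc α 1)
    (hs : 0 < s) (hst : s < t) :
    s ^ (-α) - t ^ (-α) ≤ s ^ (-lam) * (t - s) ^ (lam - α) := by
  obtain ⟨hα0, hα1⟩ := hα
  obtain ⟨hlα, hl1⟩ := hlam
  have ht : (0:ℝ) < t := hs.trans hst
  have hu : (0:ℝ) < t - s := by linarith
  have hAs : (0:ℝ) < s ^ α := Real.rpow_pos_of_pos hs _
  have hBt : (0:ℝ) < t ^ α := Real.rpow_pos_of_pos ht _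
  have hsl : (0:ℝ) < s ^ lam := Real.rpow_pos_of_pos hs _
  rcases le_or_gt s (t - s) with h2 | h2
  · -- case t - s ≥ s
    have h1 : s ^ (-α) - t ^ (-α) ≤ s ^ (-α) := by
      have : (0:ℝ) < t ^ (-α) := Real.rpow_pos_of_pos ht _
      linarith
    have h2' : s ^ (lam - α) ≤ (t - s) ^ (lam - α) :=
      Real.rpow_le_rpow hs.le h2 (by linarith)
    calc s ^ (-α) - t ^ (-α) ≤ s ^ (-α) := h1
      _ = s ^ (-lam) * s ^ (lam - α) := by
          rw [← Real.rpow_add hs]; ring_nf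
      _ ≤ s ^ (-lam) * (t - s) ^ (lam - α) :=
          mul_le_mul_of_nonneg_left h2' (Real.rpow_nonneg hs.le _)
  · -- case t - s < s : use Bernoulli (concavity of x^α)
    have hbern : (t / s) ^ α ≤ 1 + α * (t / s - 1) := by
      have := rpow_one_add_le_one_add_mul_self (s := t / s - 1)
        (by have : 0 < t / s := div_pos ht hs; linarith) hα0.le hα1
      simpa using this
    have htα : t ^ α ≤ s ^ α + α * s ^ α * ((t - s) / s) := by
      have hts : t ^ α = s ^ α * (t / s) ^ α := by
        rw [← Real.mul_rpow hs.le (by positivity)]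
        rw [mul_div_cancel₀ _ hs.ne']
      rw [hts]
      calc s ^ α * (t / s) ^ α ≤ s ^ α * (1 + α * (t / s - 1)) :=
            mul_le_mul_of_nonneg_left hbern hAs.le
        _ = s ^ α + α * s ^ α * ((t - s) / s) := by
            field_simp
    -- so s^{-α} - t^{-α} = (t^α - s^α)/(s^α t^α) ≤ (t-s)/(s * t^α)
    have key1 : s ^ (-α) - t ^ (-α) ≤ (t - s) / (s * t ^ α) := by
      rw [Real.rpow_neg hs.le, Real.rpow_neg ht.le]
      have hdiff2 : t ^ α - s ^ α ≤ s ^ α * ((t - s) / s) := by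
        have h0 : 0 ≤ s ^ α * ((t - s) / s) := by positivity
        nlinarith [mul_le_mul_of_nonneg_right hα1 h0]
      rw [inv_sub_inv hAs.ne' hBt.ne', div_le_div_iff₀ (by positivity) (by positivity)]
      rw [mul_div_assoc', le_div_iff₀ hs] at hdiff2
      nlinarith [mul_le_mul_of_nonneg_right hdiff2 hBt.le, mul_pos hAs hBt]
    -- now (t-s)/(s * t^α) ≤ s^{-lam} (t-s)^{lam-α}
    have key2 : (t - s) / (s * t ^ α) ≤ s ^ (-lam) * (t - s) ^ (lam - α) := by
      rw [Real.rpow_neg hs.le, div_le_iff₀ (by positivity)]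
      have hsplit : t - s = (t - s) ^ (lam - α) * ((t - s) ^ (1 - lam) * (t - s) ^ α) := by
        rw [← Real.rpow_add hu, ← Real.rpow_add hu]
        norm_num
      have h1 : (t - s) ^ (1 - lam) ≤ s ^ (1 - lam) :=
        Real.rpow_le_rpow hu.le h2.le (by linarith)
      have h2' : (t - s) ^ α ≤ t ^ α :=
        Real.rpow_le_rpow hu.le (by linarith) hα0.le
      have h3 : (t - s) ^ (1 - lam) * (t - s) ^ α ≤ s ^ (1 - lam) * t ^ α :=
        mul_le_mul h1 h2' (Real.rpow_nonneg hu.le _) (Real.rpow_nonneg hs.le _)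
      have hsexp : s ^ (1 - lam) = s * (s ^ lam)⁻¹ := by
        rw [show (1 - lam) = 1 + (-lam) by ring, Real.rpow_add hs, Real.rpow_one,
          Real.rpow_neg hs.le]
      calc t - s = (t - s) ^ (lam - α) * ((t - s) ^ (1 - lam) * (t - s) ^ α) := hsplit
        _ ≤ (t - s) ^ (lam - α) * (s ^ (1 - lam) * t ^ α) :=
            mul_le_mul_of_nonneg_left h3 (Real.rpow_nonneg hu.le _)
        _ = (s ^ lam)⁻¹ * (t - s) ^ (lam - α) * (s * t ^ α) := by
            rw [hsexp]; ring
    linarith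
end

section
/- Let T > 0 and 0 < α < λ < 1. Then for every G ≥ 0 and every g : [0,T] → ℝ with g(0) = 0 and |g(t) − g(s)| ≤ G|t − s|^λ for all s, t ∈ [0,T], the function D g defined by D g(t) = g(t)/t^α for t ∈ (0,T] and D g(0) = 0 satisfies |D g(t)| ≤ G t^{λ−α} for all t ∈ (0,T], and |D g(t) − D g(s)| ≤ 2 G (t − s)^{λ−α} for all 0 ≤ s ≤ t ≤ T. -/
open Set Real

/-!
Write `β = λ - α`. Hölder continuity from `0` gives `|g t| ≤ G t^λ`, hence `|g t / t^α| ≤ G t^β`.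
For `0 < s < t` split
`g t / t^α - g s / s^α = (g t - g s) / t^α - (g s / s^α) (1 - (s/t)^α)`.
The first term is at most `G (t - s)^λ / (t - s)^α`. For the second, with `x = s/t ∈ (0, 1]`,
`1 - x^α ≤ 1 - x ≤ (1 - x)^β` because `α, β ≤ 1`, so `s^β (1 - x^α) ≤ t^β (1 - x)^β = (t - s)^β`.
-/

lemma abs_div_rpow_le {α lam G x t : ℝ} (ht : 0 < t) (hx : |x| ≤ G * t ^ lam) :
    |x / t ^ α| ≤ G * t ^ (lam - α) := by
  rw [abs_div, abs_of_pos (rpow_pos_of_pos ht α), div_le_iff₀ (rpow_pos_of_pos ht α), mul_assoc,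
    ← rpow_add ht, sub_add_cancel]
  exact hx

lemma rpow_mul_one_sub_div_rpow_le {α β s t : ℝ} (hα0 : 0 ≤ α) (hα1 : α ≤ 1) (hβ0 : 0 ≤ β)
    (hβ1 : β ≤ 1) (hs : 0 ≤ s) (hst : s ≤ t) (ht : 0 < t) :
    s ^ β * (1 - (s / t) ^ α) ≤ (t - s) ^ β := by
  have hx0 : 0 ≤ s / t := div_nonneg hs ht.le
  have hx1 : s / t ≤ 1 := div_le_one_of_le₀ hst ht.le
  calc s ^ β * (1 - (s / t) ^ α)
      ≤ t ^ β * (1 - s / t) :=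
        mul_le_mul (rpow_le_rpow hs hst hβ0)
          (sub_le_sub_left (self_le_rpow_of_le_one hx0 hx1 hα1) 1)
          (sub_nonneg.2 (rpow_le_one hx0 hx1 hα0)) (rpow_nonneg ht.le β)
    _ ≤ t ^ β * (1 - s / t) ^ β :=
        mul_le_mul_of_nonneg_left
          (self_le_rpow_of_le_one (sub_nonneg.2 hx1) (by linarith) hβ1) (rpow_nonneg ht.le β)
    _ = (t - s) ^ β := by
        rw [← mul_rpow ht.le (sub_nonneg.2 hx1), mul_one_sub, mul_div_cancel₀ _ ht.ne']

lemma abs_div_rpow_sub_div_rpow_le {α lam G a b s t : ℝ} (hα0 : 0 ≤ α) (hα1 : α ≤ 1)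
    (hαlam : α ≤ lam) (hlam : lam ≤ 1 + α) (hG : 0 ≤ G) (hs : 0 < s) (hst : s < t)
    (ha : |a| ≤ G * s ^ lam) (hab : |b - a| ≤ G * (t - s) ^ lam) :
    |b / t ^ α - a / s ^ α| ≤ 2 * G * (t - s) ^ (lam - α) := by
  have ht : 0 < t := hs.trans hst
  have hts : 0 < t - s := sub_pos.2 hst
  have hc : 0 ≤ 1 - (s / t) ^ α :=
    sub_nonneg.2 (rpow_le_one (div_nonneg hs.le ht.le) (div_le_one_of_le₀ hst.le ht.le) hα0)
  have hdecomp : b / t ^ α - a / s ^ α = (b - a) / t ^ α - a / s ^ α * (1 - (s / t) ^ α) := by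
    have := (rpow_pos_of_pos hs α).ne'
    rw [div_rpow hs.le ht.le]
    field_simp
    ring
  have hincrement : |(b - a) / t ^ α| ≤ G * (t - s) ^ (lam - α) := by
    refine le_trans ?_ (abs_div_rpow_le hts hab)
    rw [abs_div, abs_div, abs_of_pos (rpow_pos_of_pos ht α), abs_of_pos (rpow_pos_of_pos hts α)]
    exact div_le_div_of_nonneg_left (abs_nonneg _) (rpow_pos_of_pos hts α)
      (rpow_le_rpow hts.le (by linarith) hα0)
  have hcorrection : |a / s ^ α * (1 - (s / t) ^ α)| ≤ G * (t - s) ^ (lam - α) :=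
    calc |a / s ^ α * (1 - (s / t) ^ α)| = |a / s ^ α| * (1 - (s / t) ^ α) := by
          rw [abs_mul, abs_of_nonneg hc]
      _ ≤ G * s ^ (lam - α) * (1 - (s / t) ^ α) :=
          mul_le_mul_of_nonneg_right (abs_div_rpow_le hs ha) hc
      _ ≤ G * (t - s) ^ (lam - α) := by
          rw [mul_assoc]
          exact mul_le_mul_of_nonneg_left (rpow_mul_one_sub_div_rpow_le hα0 hα1
            (by linarith) (by linarith) hs.le hst.le ht) hG
  calc |b / t ^ α - a / s ^ α|
      ≤ |(b - a) / t ^ α| + |a / s ^ α * (1 - (s / t) ^ α)| := by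
        rw [hdecomp]; exact abs_sub _ _
    _ ≤ G * (t - s) ^ (lam - α) + G * (t - s) ^ (lam - α) := add_le_add hincrement hcorrection
    _ = 2 * G * (t - s) ^ (lam - α) := by ring

theorem stmt_14_general (T α lam : ℝ) (hα : 0 < α) (hαlam : α < lam)
    (hlam : lam < 1) :
    ∀ G : ℝ, 0 ≤ G → ∀ g : ℝ → ℝ, g 0 = 0 →
      (∀ s ∈ Set.Icc (0:ℝ) T, ∀ t ∈ Set.Icc (0:ℝ) T, |g t - g s| ≤ G * |t - s| ^ lam) →
      (∀ t ∈ Set.Ioc (0:ℝ) T, |g t / t ^ α| ≤ G * t ^ (lam - α)) ∧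
      (∀ s t : ℝ, 0 ≤ s → s ≤ t → t ≤ T →
        |g t / t ^ α - g s / s ^ α| ≤ 2 * G * (t - s) ^ (lam - α)) := by
  intro G hG g hg0 hg
  have hincrement : ∀ s t, 0 ≤ s → s ≤ t → t ≤ T → |g t - g s| ≤ G * (t - s) ^ lam := by
    intro s t hs hst htT
    simpa [abs_of_nonneg (sub_nonneg.2 hst)] using
      hg s ⟨hs, hst.trans htT⟩ t ⟨hs.trans hst, htT⟩
  have hbound : ∀ t, 0 ≤ t → t ≤ T → |g t| ≤ G * t ^ lam := fun t ht htT => by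
    simpa [hg0] using hincrement 0 t le_rfl ht htT
  have hpointwise : ∀ t ∈ Ioc 0 T, |g t / t ^ α| ≤ G * t ^ (lam - α) := fun t ht =>
    abs_div_rpow_le ht.1 (hbound t ht.1.le ht.2)
  refine ⟨hpointwise, fun s t hs hst htT => ?_⟩
  rcases hst.eq_or_lt with rfl | hst
  · rw [sub_self, sub_self, abs_zero]
    positivity
  rcases hs.eq_or_lt with rfl | hs
  · rw [hg0, zero_div, sub_zero, sub_zero]
    linarith [hpointwise t ⟨hst, htT⟩, (by positivity : 0 ≤ G * t ^ (lam - α))]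
  · exact abs_div_rpow_sub_div_rpow_le hα.le (by linarith) hαlam.le (by linarith) hG hs hst
      (hbound s hs.le (hst.le.trans htT)) (hincrement s t hs.le hst.le htT)

/-- continuity of the operator D g(t) = g(t)/t^α from C₀^λ to C₀^{λ-α}
(Lemma B).  Note that `g t / t ^ α` equals `0` at `t = 0` (since `g 0 = 0`), which
realizes the convention `D g (0) = 0`. -/
theorem stmt_14 (T α lam : ℝ) (hT : 0 < T) (hα : 0 < α) (hαlam : α < lam)
    (hlam : lam < 1) :
    ∀ G : ℝ, 0 ≤ G → ∀ g : ℝ → ℝ, g 0 = 0 →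
      (∀ s ∈ Set.Icc (0:ℝ) T, ∀ t ∈ Set.Icc (0:ℝ) T, |g t - g s| ≤ G * |t - s| ^ lam) →
      (∀ t ∈ Set.Ioc (0:ℝ) T, |g t / t ^ α| ≤ G * t ^ (lam - α)) ∧
      (∀ s t : ℝ, 0 ≤ s → s ≤ t → t ≤ T →
        |g t / t ^ α - g s / s ^ α| ≤ 2 * G * (t - s) ^ (lam - α)) :=
  stmt_14_general T α lam hα hαlam hlam
end

section
/- Let T > 0, α ∈ [0,1), λ ∈ (α,1), K > 0, and let d : (0,T] → ℝ be a measurable function with |d(s)| ≤ K s^{−α} for all s ∈ (0,T]. Then there exists a constant C > 0, depending only on T, α, λ and K, such that for every G ≥ 0 and every g : [0,T] → ℝ with g(0) = 0 and |g(t) − g(s)| ≤ G|t − s|^λ for all s, t ∈ [0,T], the function I₂g(t) = ∫₀^t d(t−s)(g(t) − g(s)) ds is well defined on [0,T], satisfies |I₂g(t)| ≤ C G t^{λ−α} for all t ∈ [0,T] (so I₂g(0) = 0), and satisfies |I₂g(t+h) − I₂g(t)| ≤ C G h^{λ−α} for all t ≥ 0 and h ∈ (0,1) with t + h ≤ T.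 -/
/-!
Substituting `u = t - s` turns `I₂ g (t)` into `∫₀ᵗ d u * (g t - g (t - u)) du`, whose integrand
is bounded by `K G u ^ (λ - α)`; this gives integrability and the bound `K G T t ^ (λ - α)`.
For the increment `I₂ g (t + h) - I₂ g (t)`, split the integrals at `m = min t h`: on `[t, t + h]`
and `[0, m]` the integrands are bounded by `K G h ^ (λ - α)` up to constants, while on `[m, t]`
the difference of the two integrands is at most `2 K G h ^ λ u ^ (-α)`, integrable as `α < 1`.
-/

open MeasureTheory Set Filter Topology intervalIntegral

lemma continuousOn_of_abs_sub_le_rpow {S : Set ℝ} {g : ℝ → ℝ} {G lam : ℝ} (hlam : 0 < lam)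
    (hg : ∀ s ∈ S, ∀ t ∈ S, |g t - g s| ≤ G * |t - s| ^ lam) : ContinuousOn g S := by
  intro x hx
  rw [ContinuousWithinAt, ← tendsto_sub_nhds_zero_iff]
  have hbound : Tendsto (fun y => G * |y - x| ^ lam) (𝓝[S] x) (𝓝 0) := by
    have hcont : Continuous fun y => G * |y - x| ^ lam :=
      continuous_const.mul ((continuous_id.sub continuous_const).abs.rpow_const
        fun _ => Or.inr hlam.le)
    exact (hcont.tendsto' x 0 (by simp [Real.zero_rpow hlam.ne'])).mono_left nhdsWithin_le_nhds
  refine squeeze_zero_norm' ?_ hbound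
  filter_upwards [self_mem_nhdsWithin] with y hy using hg x hx y hy

variable {E : Type*} [NormedAddCommGroup E]

lemma setIntegral_Ioc_comp_sub_left [NormedSpace ℝ E] (f : ℝ → E) {t : ℝ} (ht : 0 ≤ t) :
    ∫ s in Ioc 0 t, f (t - s) = ∫ u in (0:ℝ)..t, f u := by
  rw [← integral_of_le ht, integral_comp_sub_left]
  simp

lemma IntervalIntegrable.integrableOn_Ioc_comp_sub_left {f : ℝ → E} {t : ℝ} (ht : 0 ≤ t)
    (hf : IntervalIntegrable f volume 0 t) : IntegrableOn (fun s => f (t - s)) (Ioc 0 t) := by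
  rw [← intervalIntegrable_iff_integrableOn_Ioc_of_le ht]
  simpa using (hf.comp_sub_left t).symm

lemma integral_sub_integral_eq_of_adjacent [NormedSpace ℝ E] {f g : ℝ → E} {a b c e : ℝ}
    (hf_ab : IntervalIntegrable f volume a b) (hf_bc : IntervalIntegrable f volume b c)
    (hf_ce : IntervalIntegrable f volume c e) (hg_ab : IntervalIntegrable g volume a b)
    (hg_bc : IntervalIntegrable g volume b c) :
    (∫ x in a..e, f x) - ∫ x in a..c, g x =
      (∫ x in c..e, f x) + ((∫ x in a..b, f x) - ∫ x in a..b, g x) + ∫ x in b..c, f x - g x := by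
  rw [← integral_add_adjacent_intervals (hf_ab.trans hf_bc) hf_ce,
    ← integral_add_adjacent_intervals hf_ab hf_bc, ← integral_add_adjacent_intervals hg_ab hg_bc,
    integral_sub hf_bc hg_bc]
  abel

/-- The integrand of `I₂ g (τ)` in the lag variable `u = τ - s`. -/
def lagIntegrand (d g : ℝ → ℝ) (τ u : ℝ) : ℝ := d u * (g τ - g (τ - u))

section lagIntegrand

variable {T α lam K G : ℝ} {d g : ℝ → ℝ}

lemma integral_Ioc_eq_integral_lagIntegrand {t : ℝ} (ht : 0 ≤ t) :
    ∫ s in Ioc 0 t, d (t - s) * (g t - g s) = ∫ u in (0:ℝ)..t, lagIntegrand d g t u := by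
  simpa [lagIntegrand] using setIntegral_Ioc_comp_sub_left (lagIntegrand d g t) ht

lemma abs_lagIntegrand_le (hdb : ∀ s ∈ Ioc (0:ℝ) T, |d s| ≤ K * s ^ (-α))
    (hgH : ∀ s ∈ Icc (0:ℝ) T, ∀ t ∈ Icc (0:ℝ) T, |g t - g s| ≤ G * |t - s| ^ lam)
    {τ u : ℝ} (hτ : τ ≤ T) (hu : u ∈ Ioc 0 τ) :
    |lagIntegrand d g τ u| ≤ K * G * u ^ (lam - α) := by
  obtain ⟨hu0, huτ⟩ := hu
  have hd : |d u| ≤ K * u ^ (-α) := hdb u ⟨hu0, huτ.trans hτ⟩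
  have hg : |g τ - g (τ - u)| ≤ G * u ^ lam := by
    simpa [abs_of_pos hu0] using
      hgH (τ - u) ⟨by linarith, by linarith⟩ τ ⟨by linarith, hτ⟩
  calc |lagIntegrand d g τ u| ≤ K * u ^ (-α) * (G * u ^ lam) := by
        rw [lagIntegrand, abs_mul]
        exact mul_le_mul hd hg (abs_nonneg _) ((abs_nonneg _).trans hd)
    _ = K * G * u ^ (lam - α) := by
        rw [sub_eq_neg_add, Real.rpow_add hu0]
        ring

lemma abs_lagIntegrand_sub_le (hdb : ∀ s ∈ Ioc (0:ℝ) T, |d s| ≤ K * s ^ (-α))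
    (hgH : ∀ s ∈ Icc (0:ℝ) T, ∀ t ∈ Icc (0:ℝ) T, |g t - g s| ≤ G * |t - s| ^ lam)
    {t h u : ℝ} (hh : 0 ≤ h) (hth : t + h ≤ T) (hu : u ∈ Ioc 0 t) :
    |lagIntegrand d g (t + h) u - lagIntegrand d g t u| ≤ 2 * K * G * h ^ lam * u ^ (-α) := by
  obtain ⟨hu0, hut⟩ := hu
  have hd : |d u| ≤ K * u ^ (-α) := hdb u ⟨hu0, by linarith⟩
  have hg (x : ℝ) (hx0 : 0 ≤ x) (hxt : x ≤ t) : |g (x + h) - g x| ≤ G * h ^ lam := by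
    simpa [abs_of_nonneg hh] using hgH x ⟨hx0, by linarith⟩ (x + h) ⟨by linarith, by linarith⟩
  have hincr : |(g (t + h) - g t) - (g (t - u + h) - g (t - u))| ≤ 2 * G * h ^ lam := by
    linarith [abs_sub (g (t + h) - g t) (g (t - u + h) - g (t - u)),
      hg t (by linarith) le_rfl, hg (t - u) (by linarith) (by linarith)]
  calc |lagIntegrand d g (t + h) u - lagIntegrand d g t u|
      = |d u| * |(g (t + h) - g t) - (g (t - u + h) - g (t - u))| := by
        rw [lagIntegrand, lagIntegrand, ← abs_mul]
        ring_nf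
    _ ≤ K * u ^ (-α) * (2 * G * h ^ lam) :=
        mul_le_mul hd hincr (abs_nonneg _) ((abs_nonneg _).trans hd)
    _ = 2 * K * G * h ^ lam * u ^ (-α) := by ring

lemma intervalIntegrable_lagIntegrand (hd : Measurable d)
    (hdb : ∀ s ∈ Ioc (0:ℝ) T, |d s| ≤ K * s ^ (-α))
    (hgH : ∀ s ∈ Icc (0:ℝ) T, ∀ t ∈ Icc (0:ℝ) T, |g t - g s| ≤ G * |t - s| ^ lam)
    (hlam : 0 < lam) (hβ : -1 < lam - α) {a b τ : ℝ} (ha : 0 ≤ a) (hab : a ≤ b) (hbτ : b ≤ τ)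
    (hτ : τ ≤ T) : IntervalIntegrable (lagIntegrand d g τ) volume a b := by
  rw [intervalIntegrable_iff_integrableOn_Ioc_of_le hab]
  have hg : ContinuousOn (fun u => g (τ - u)) (Ioc a b) :=
    (continuousOn_of_abs_sub_le_rpow hlam hgH).comp (by fun_prop)
      fun u hu => ⟨by linarith [hu.2], by linarith [hu.1]⟩
  have hmeas : AEStronglyMeasurable (lagIntegrand d g τ) (volume.restrict (Ioc a b)) :=
    hd.aestronglyMeasurable.mul
      (aestronglyMeasurable_const.sub (hg.aestronglyMeasurable measurableSet_Ioc))
  have hdom : IntegrableOn (fun u => K * G * u ^ (lam - α)) (Ioc a b) :=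
    (intervalIntegrable_iff_integrableOn_Ioc_of_le hab).1
      ((intervalIntegrable_rpow' hβ).const_mul _)
  refine hdom.mono' hmeas ((ae_restrict_iff' measurableSet_Ioc).2 (Eventually.of_forall ?_))
  exact fun u hu => abs_lagIntegrand_le hdb hgH hτ ⟨by linarith [hu.1], hu.2.trans hbτ⟩

lemma abs_integral_lagIntegrand_le (hdb : ∀ s ∈ Ioc (0:ℝ) T, |d s| ≤ K * s ^ (-α))
    (hgH : ∀ s ∈ Icc (0:ℝ) T, ∀ t ∈ Icc (0:ℝ) T, |g t - g s| ≤ G * |t - s| ^ lam)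
    (hK : 0 ≤ K) (hG : 0 ≤ G) (hβ : 0 ≤ lam - α) {a b τ : ℝ} (ha : 0 ≤ a) (hab : a ≤ b)
    (hbτ : b ≤ τ) (hτ : τ ≤ T) :
    |∫ u in a..b, lagIntegrand d g τ u| ≤ K * G * b ^ (lam - α) * (b - a) := by
  have hbound : ∀ u ∈ uIoc a b, ‖lagIntegrand d g τ u‖ ≤ K * G * b ^ (lam - α) := by
    rw [uIoc_of_le hab]
    intro u hu
    calc ‖lagIntegrand d g τ u‖ ≤ K * G * u ^ (lam - α) :=
          abs_lagIntegrand_le hdb hgH hτ ⟨by linarith [hu.1], hu.2.trans hbτ⟩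
      _ ≤ K * G * b ^ (lam - α) := by
          have : 0 ≤ u := by linarith [hu.1]
          gcongr
          exact hu.2
  simpa [abs_of_nonneg (sub_nonneg.2 hab)] using norm_integral_le_of_norm_le_const hbound

lemma abs_integral_lagIntegrand_sub_le (hdb : ∀ s ∈ Ioc (0:ℝ) T, |d s| ≤ K * s ^ (-α))
    (hgH : ∀ s ∈ Icc (0:ℝ) T, ∀ t ∈ Icc (0:ℝ) T, |g t - g s| ≤ G * |t - s| ^ lam)
    (hK : 0 ≤ K) (hG : 0 ≤ G) (hα : α < 1) {m t h : ℝ} (hm : 0 ≤ m) (hmt : m ≤ t) (hh : 0 ≤ h)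
    (hth : t + h ≤ T) :
    |∫ u in m..t, lagIntegrand d g (t + h) u - lagIntegrand d g t u| ≤
      2 * K * G * h ^ lam * (t ^ (1 - α) / (1 - α)) := by
  have hbound : ∀ᵐ u, u ∈ Ioc m t →
      ‖lagIntegrand d g (t + h) u - lagIntegrand d g t u‖ ≤ 2 * K * G * h ^ lam * u ^ (-α) :=
    Eventually.of_forall fun u hu =>
      abs_lagIntegrand_sub_le hdb hgH hh hth ⟨by linarith [hu.1], hu.2⟩
  have h1α : 0 < 1 - α := by linarith
  calc |∫ u in m..t, lagIntegrand d g (t + h) u - lagIntegrand d g t u|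
      ≤ ∫ u in m..t, 2 * K * G * h ^ lam * u ^ (-α) :=
        norm_integral_le_of_norm_le hmt hbound
          ((intervalIntegrable_rpow' (by linarith)).const_mul _)
    _ = 2 * K * G * h ^ lam * ((t ^ (1 - α) - m ^ (1 - α)) / (1 - α)) := by
        rw [intervalIntegral.integral_const_mul, integral_rpow (Or.inl (by linarith)),
          neg_add_eq_sub]
    _ ≤ 2 * K * G * h ^ lam * (t ^ (1 - α) / (1 - α)) := by
        gcongr
        exact sub_le_self _ (by positivity)

lemma abs_integral_lagIntegrand_sub_integral_le (hd : Measurable d)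
    (hdb : ∀ s ∈ Ioc (0:ℝ) T, |d s| ≤ K * s ^ (-α))
    (hgH : ∀ s ∈ Icc (0:ℝ) T, ∀ t ∈ Icc (0:ℝ) T, |g t - g s| ≤ G * |t - s| ^ lam)
    (hK : 0 ≤ K) (hG : 0 ≤ G) (hα : 0 ≤ α) (hαlam : α < lam) (hlam : lam ≤ 1)
    {t h : ℝ} (ht : 0 ≤ t) (hh0 : 0 < h) (hh1 : h ≤ 1) (hth : t + h ≤ T) :
    |(∫ u in (0:ℝ)..(t + h), lagIntegrand d g (t + h) u) - ∫ u in (0:ℝ)..t, lagIntegrand d g t u|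
      ≤ K * (T ^ (lam - α) + 2 + 2 * T ^ (1 - α) / (1 - α)) * G * h ^ (lam - α) := by
  have hβ : 0 ≤ lam - α := by linarith
  have hF {a b τ : ℝ} (ha : 0 ≤ a) (hab : a ≤ b) (hbτ : b ≤ τ) (hτ : τ ≤ T) :=
    intervalIntegrable_lagIntegrand hd hdb hgH (by linarith) (by linarith) ha hab hbτ hτ
  set m := min t h
  have hm : 0 ≤ m := le_min ht hh0.le
  have hmt : m ≤ t := min_le_left t h
  have hmh : m ≤ h := min_le_right t h
  rw [integral_sub_integral_eq_of_adjacent (b := m) (hF le_rfl hm (by linarith) hth)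
    (hF hm hmt (by linarith) hth) (hF ht (by linarith) le_rfl hth)
    (hF le_rfl hm hmt (by linarith)) (hF hm hmt le_rfl (by linarith))]
  have hA : |∫ u in t..(t + h), lagIntegrand d g (t + h) u| ≤
      K * G * T ^ (lam - α) * h ^ (lam - α) := by
    refine (abs_integral_lagIntegrand_le hdb hgH hK hG hβ ht (by linarith) le_rfl hth).trans ?_
    have hT : 0 ≤ T := by linarith
    rw [add_sub_cancel_left]
    gcongr
    exact Real.self_le_rpow_of_le_one hh0.le hh1 (by linarith)
  have hB {τ : ℝ} (hτ : m ≤ τ) (hτT : τ ≤ T) :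
      |∫ u in (0:ℝ)..m, lagIntegrand d g τ u| ≤ K * G * h ^ (lam - α) := by
    refine (abs_integral_lagIntegrand_le hdb hgH hK hG hβ le_rfl hm hτ hτT).trans ?_
    calc K * G * m ^ (lam - α) * (m - 0) ≤ K * G * h ^ (lam - α) * 1 := by
          gcongr
          linarith
      _ = K * G * h ^ (lam - α) := mul_one _
  have hD : |∫ u in m..t, lagIntegrand d g (t + h) u - lagIntegrand d g t u| ≤
      2 * K * G * h ^ (lam - α) * (T ^ (1 - α) / (1 - α)) := by
    refine (abs_integral_lagIntegrand_sub_le hdb hgH hK hG (by linarith) hm hmt hh0.le hth).trans ?_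
    have h1α : 0 < 1 - α := by linarith
    gcongr 2 * K * G * ?_ * (?_ / _)
    · exact Real.rpow_le_rpow_of_exponent_ge hh0 hh1 (by linarith)
    · exact Real.rpow_le_rpow ht (by linarith) h1α.le
  calc _ ≤ _ := abs_add_three _ _ _
    _ ≤ K * G * T ^ (lam - α) * h ^ (lam - α) + (K * G * h ^ (lam - α) + K * G * h ^ (lam - α))
        + 2 * K * G * h ^ (lam - α) * (T ^ (1 - α) / (1 - α)) := by
        gcongr
        exact (abs_sub _ _).trans (add_le_add (hB (by linarith) hth) (hB hmt (by linarith)))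
    _ = _ := by ring

end lagIntegrand

/-- continuity of the operator I₂ from C₀^λ to C₀^{λ-α} (Lemma B). -/
theorem stmt_17 (T α lam K : ℝ) (hT : 0 < T) (hα : α ∈ Set.Ico (0:ℝ) 1)
    (hlam : lam ∈ Set.Ioo α 1) (hK : 0 < K) (d : ℝ → ℝ) (hd : Measurable d)
    (hdb : ∀ s ∈ Set.Ioc (0:ℝ) T, |d s| ≤ K * s ^ (-α)) :
    ∃ C > 0, ∀ G : ℝ, 0 ≤ G → ∀ g : ℝ → ℝ, g 0 = 0 →
      (∀ s ∈ Set.Icc (0:ℝ) T, ∀ t ∈ Set.Icc (0:ℝ) T, |g t - g s| ≤ G * |t - s| ^ lam) →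
      (∀ t ∈ Set.Icc (0:ℝ) T,
        MeasureTheory.IntegrableOn (fun s => d (t - s) * (g t - g s)) (Set.Ioc 0 t)) ∧
      (∀ t ∈ Set.Icc (0:ℝ) T,
        |∫ s in Set.Ioc (0:ℝ) t, d (t - s) * (g t - g s)| ≤ C * G * t ^ (lam - α)) ∧
      (∀ t h : ℝ, 0 ≤ t → 0 < h → h < 1 → t + h ≤ T →
        |(∫ s in Set.Ioc (0:ℝ) (t + h), d (t + h - s) * (g (t + h) - g s)) -
          ∫ s in Set.Ioc (0:ℝ) t, d (t - s) * (g t - g s)| ≤ C * G * h ^ (lam - α)) := by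
  obtain ⟨hα0, hα1⟩ := hα
  obtain ⟨hαlam, hlam1⟩ := hlam
  have hβ : 0 ≤ lam - α := by linarith
  have h1α : 0 < 1 - α := by linarith
  set C' := T ^ (lam - α) + 2 + 2 * T ^ (1 - α) / (1 - α)
  have hC' : 0 ≤ C' := by positivity
  refine ⟨K * (T + C'), by positivity, fun G hG g _ hgH => ⟨fun t ht => ?_, fun t ht => ?_,
    fun t h ht hh0 hh1 hth => ?_⟩⟩
  · simpa [lagIntegrand] using (intervalIntegrable_lagIntegrand hd hdb hgH (by linarith)
      (by linarith) le_rfl ht.1 le_rfl ht.2).integrableOn_Ioc_comp_sub_left ht.1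
  · rw [integral_Ioc_eq_integral_lagIntegrand ht.1]
    calc _ ≤ K * G * t ^ (lam - α) * (t - 0) :=
          abs_integral_lagIntegrand_le hdb hgH hK.le hG hβ le_rfl ht.1 le_rfl ht.2
      _ ≤ K * G * t ^ (lam - α) * (T + C') := by
          have ht0 : 0 ≤ t := ht.1
          gcongr
          linarith [ht.2]
      _ = _ := by ring
  · rw [integral_Ioc_eq_integral_lagIntegrand (by linarith),
      integral_Ioc_eq_integral_lagIntegrand ht]
    refine (abs_integral_lagIntegrand_sub_integral_le hd hdb hgH hK.le hG hα0 hαlam hlam1.le ht hh0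
      hh1.le hth).trans ?_
    gcongr K * ?_ * G * _
    exact le_add_of_nonneg_left hT.le
end

section
/- Let H ∈ (0,1), T > 0, and let φ : (0,T] → ℝ be differentiable on (0,T] such that the function f(u) = u^{1/2−H}φ(u) is Lipschitz on (0,T]. Then the limit c = lim_{u↓0} u^{1/2−H}φ(u) exists, and there is a constant C > 0 such that the function φ̂(u) = φ(u) − c u^{H−1/2} satisfies |φ̂(u)| ≤ C u^{H+1/2} and |φ̂′(u)| ≤ C u^{H−1/2} for all u ∈ (0,T]. -/
/-!
The function `g u = u ^ (1/2 - H) * φ u` is Lipschitz on `(0, T]`, so its McShane extension to `ℝ`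
is continuous, and its value `c` at `0` is the limit at `0⁺` and `|g u - c| ≤ L u`. Difference quotients of `g`
inside `(0, T]` (one-sided at `u = T`) bound `|g'| ≤ L`. Both estimates follow by writing
`φ u = u ^ (H - 1/2) * g u` and differentiating this product.
-/

open Set Filter Topology
open scoped NNReal

theorem HasDerivWithinAt.norm_le_of_lipschitzOnWith {𝕜 F : Type*} [NontriviallyNormedField 𝕜]
    [NormedAddCommGroup F] [NormedSpace 𝕜 F] {f : 𝕜 → F} {f' : F} {s : Set 𝕜} {x : 𝕜}
    {K : ℝ≥0} (hf : HasDerivWithinAt f f' s x) (hlip : LipschitzOnWith K f s) (hx : x ∈ s)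
    [(𝓝[s \ {x}] x).NeBot] : ‖f'‖ ≤ K := by
  refine le_of_tendsto (hasDerivWithinAt_iff_tendsto_slope.1 hf).norm ?_
  filter_upwards [self_mem_nhdsWithin] with y ⟨hys, hyx⟩
  have hdist : 0 < ‖y - x‖ := norm_pos_iff.2 (sub_ne_zero.2 hyx)
  rw [slope, vsub_eq_sub, norm_smul, norm_inv, inv_mul_le_iff₀ hdist, mul_comm, ← dist_eq_norm,
    ← dist_eq_norm]
  exact hlip.dist_le_mul y hys x hx

theorem LipschitzOnWith.exists_tendsto_nhdsGT {f : ℝ → ℝ} {K : ℝ≥0} {a b : ℝ}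
    (hf : LipschitzOnWith K f (Ioc a b)) (hab : a < b) :
    ∃ c, Tendsto f (𝓝[>] a) (𝓝 c) ∧ ∀ u ∈ Ioc a b, |f u - c| ≤ K * (u - a) := by
  obtain ⟨g, hg, hfg⟩ := hf.extend_real
  refine ⟨g a, ?_, fun u hu => ?_⟩
  · exact (hg.continuous.tendsto' a _ rfl).mono_left nhdsWithin_le_nhds |>.congr'
      (eventuallyEq_of_mem (Ioc_mem_nhdsGT hab) hfg).symm
  · rw [hfg hu, ← Real.dist_eq, ← abs_of_pos (sub_pos.2 hu.1), ← Real.dist_eq]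
    exact hg.dist_le_mul u a

theorem HasDerivAt.eq_of_hasDerivAt_rpow_neg_mul {φ : ℝ → ℝ} {r u φ' D : ℝ} (hu : 0 < u)
    (hφ : HasDerivAt φ φ' u) (hg : HasDerivAt (fun v => v ^ (-r) * φ v) D u) :
    φ' = r * u ^ (r - 1) * (u ^ (-r) * φ u) + u ^ r * D := by
  have hψ := (Real.hasDerivAt_rpow_const (p := r) (Or.inl hu.ne')).mul hg
  refine hφ.unique (hψ.congr_of_eventuallyEq ?_)
  filter_upwards [Ioi_mem_nhds hu] with v hv
  rw [Pi.mul_apply, Real.rpow_neg hv.le, mul_inv_cancel_left₀ (Real.rpow_pos_of_pos hv r).ne']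

theorem abs_sub_rpow_le_of_hasDerivAt_rpow_neg_mul {φ : ℝ → ℝ} {r u c K φ' D : ℝ} (hu : 0 < u)
    (hφ : HasDerivAt φ φ' u) (hg : HasDerivAt (fun v => v ^ (-r) * φ v) D u)
    (hgc : |u ^ (-r) * φ u - c| ≤ K * u) (hD : |D| ≤ K) :
    |φ u - c * u ^ r| ≤ K * u ^ (r + 1) ∧ |φ' - c * r * u ^ (r - 1)| ≤ K * (1 + |r|) * u ^ r := by
  have hφu : φ u = u ^ r * (u ^ (-r) * φ u) := by
    rw [Real.rpow_neg hu.le, mul_inv_cancel_left₀ (Real.rpow_pos_of_pos hu r).ne']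
  have hφ' := hφ.eq_of_hasDerivAt_rpow_neg_mul hu hg
  set g := u ^ (-r) * φ u
  have hur : 0 < u ^ r := Real.rpow_pos_of_pos hu r
  have hur' : 0 < u ^ (r - 1) := Real.rpow_pos_of_pos hu _
  constructor
  · calc |φ u - c * u ^ r| = u ^ r * |g - c| := by
          rw [hφu, show u ^ r * g - c * u ^ r = u ^ r * (g - c) by ring, abs_mul, abs_of_pos hur]
      _ ≤ u ^ r * (K * u) := by gcongr
      _ = K * u ^ (r + 1) := by rw [Real.rpow_add_one hu.ne']; ring
  · calc |φ' - c * r * u ^ (r - 1)| = |r * u ^ (r - 1) * (g - c) + u ^ r * D| := by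
          rw [hφ']; ring_nf
      _ ≤ |r| * u ^ (r - 1) * |g - c| + u ^ r * |D| := by
          refine (abs_add_le _ _).trans_eq ?_
          rw [abs_mul, abs_mul, abs_mul, abs_of_pos hur, abs_of_pos hur']
      _ ≤ |r| * u ^ (r - 1) * (K * u) + u ^ r * K := by gcongr
      _ = K * (1 + |r|) * u ^ r := by
          rw [Real.rpow_sub_one hu.ne']; field_simp; ring

theorem stmt_19_general (H T : ℝ) (hT : 0 < T)
    (φ φ' : ℝ → ℝ)
    (hderiv : ∀ u ∈ Set.Ioc (0:ℝ) T, HasDerivAt φ (φ' u) u)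
    (L : ℝ)
    (hf : ∀ u ∈ Set.Ioc (0:ℝ) T, ∀ v ∈ Set.Ioc (0:ℝ) T,
      |u ^ (1/2 - H) * φ u - v ^ (1/2 - H) * φ v| ≤ L * |u - v|) :
    ∃ c : ℝ,
      Filter.Tendsto (fun u : ℝ => u ^ (1/2 - H) * φ u)
        (nhdsWithin 0 (Set.Ioi 0)) (nhds c) ∧
      ∃ C > 0, ∀ u ∈ Set.Ioc (0:ℝ) T,
        |φ u - c * u ^ (H - 1/2)| ≤ C * u ^ (H + 1/2) ∧
        |φ' u - c * (H - 1/2) * u ^ (H - 3/2)| ≤ C * u ^ (H - 1/2) := by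
  have hlip : LipschitzOnWith L.toNNReal (fun u => u ^ (1/2 - H) * φ u) (Ioc 0 T) :=
    LipschitzOnWith.of_dist_le' (by simpa only [Real.dist_eq] using hf)
  obtain ⟨c, hlim, hc⟩ := hlip.exists_tendsto_nhdsGT hT
  set K := L.toNNReal
  have hKC : (K : ℝ) ≤ K * (1 + |H - 1/2|) + 1 := by nlinarith [abs_nonneg (H - 1/2), K.2]
  refine ⟨c, hlim, K * (1 + |H - 1/2|) + 1, by positivity, fun u hu => ?_⟩
  have hg := (Real.hasDerivAt_rpow_const (p := 1/2 - H) (Or.inl hu.1.ne')).mul (hderiv u hu)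
  have : (𝓝[Ioc 0 T \ {u}] u).NeBot := (right_nhdsWithin_Ioo_neBot hu.1).mono
    (nhdsWithin_mono _ fun v hv => ⟨⟨hv.1, hv.2.le.trans hu.2⟩, hv.2.ne⟩)
  have hD := hg.hasDerivWithinAt.norm_le_of_lipschitzOnWith hlip hu
  obtain ⟨hφ, hφ'⟩ := abs_sub_rpow_le_of_hasDerivAt_rpow_neg_mul (r := H - 1/2) hu.1 (hderiv u hu)
    (by rwa [neg_sub]) (by simpa [neg_sub] using hc u hu) hD
  rw [show H - 1/2 + 1 = H + 1/2 by ring] at hφ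
  rw [show H - 1/2 - 1 = H - 3/2 by ring] at hφ'
  have hu0 : 0 < u := hu.1
  exact ⟨hφ.trans (by gcongr), hφ'.trans (by gcongr; linarith)⟩

/-- decomposition claim from the proof of Lemma B: Lipschitz continuity of
`u ↦ u^{1/2-H} φ(u)` yields `φ(u) = c u^{H-1/2} + φ̂(u)` with
`|φ̂(u)| ≤ C u^{H+1/2}` and `|φ̂′(u)| ≤ C u^{H-1/2}`. -/
theorem stmt_19 (H T : ℝ) (hH : H ∈ Set.Ioo (0:ℝ) 1) (hT : 0 < T)
    (φ φ' : ℝ → ℝ)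
    (hderiv : ∀ u ∈ Set.Ioc (0:ℝ) T, HasDerivAt φ (φ' u) u)
    (L : ℝ)
    (hf : ∀ u ∈ Set.Ioc (0:ℝ) T, ∀ v ∈ Set.Ioc (0:ℝ) T,
      |u ^ (1/2 - H) * φ u - v ^ (1/2 - H) * φ v| ≤ L * |u - v|) :
    ∃ c : ℝ,
      Filter.Tendsto (fun u : ℝ => u ^ (1/2 - H) * φ u)
        (nhdsWithin 0 (Set.Ioi 0)) (nhds c) ∧
      ∃ C > 0, ∀ u ∈ Set.Ioc (0:ℝ) T,
        |φ u - c * u ^ (H - 1/2)| ≤ C * u ^ (H + 1/2) ∧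
        |φ' u - c * (H - 1/2) * u ^ (H - 3/2)| ≤ C * u ^ (H - 1/2) :=
  stmt_19_general H T hT φ φ' hderiv L hf
end
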